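/- arXiv:1702.03095 — 5 statements merged into one kernel-verified Lean document; each statement's English description precedes it below -/
import Mathlib

section
/- Let J and D be Jacobi operators with coefficient sequences (α_k, β_k) and (γ_k, δ_k) respectively, and let c_{ij} be the entries of the connection coefficient matrix C_{J→D}, with the convention that c_{ij} = 0 whenever i = −1 or j = −1. Then c_{00} = 1, c_{i0} = 0 for all i ≥ 1, and for all integers 0 ≤ i < j one has β_{j−1} c_{i,j−1} + (α_j − γ_i) c_{ij} + β_j c_{i,j+1} − δ_{i−1} c_{i−1,j} − δ_i c_{i+1,j} = 0. -/
open Polynomial MeasureTheory Filter Topology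

noncomputable section

/-- Orthonormal polynomials of the Jacobi operator with diagonal `a` and off-diagonal `b`:
`P 0 = 1`, `P 1 = (X - a 0)/b 0`, and `X * P k = b (k-1) * P (k-1) + a k * P k + b k * P (k+1)`. -/
def orthPoly (a b : ℕ → ℝ) : ℕ → Polynomial ℝ
  | 0 => 1
  | 1 => Polynomial.C (b 0)⁻¹ * (Polynomial.X - Polynomial.C (a 0))
  | (k+2) => Polynomial.C (b (k+1))⁻¹ *
      ((Polynomial.X - Polynomial.C (a (k+1))) * orthPoly a b (k+1)
        - Polynomial.C (b k) * orthPoly a b k)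

lemma degC_mul_le (r : ℝ) (p : Polynomial ℝ) : (C r * p).degree ≤ p.degree :=
  (degree_mul_le _ _).trans (by simpa using add_le_add_left (degree_C_le (a := r)) p.degree)

lemma orthPoly_deg_coeff (a b : ℕ → ℝ) :
    ∀ k, (orthPoly a b k).degree ≤ k ∧
      (orthPoly a b k).coeff k = ∏ i ∈ Finset.range k, (b i)⁻¹ := by
  intro k
  induction k using Nat.strong_induction_on with
  | _ k ih =>
    match k with
    | 0 => simp [orthPoly]
    | 1 =>
      constructor
      · rw [orthPoly]
        refine (degC_mul_le _ _).trans ((degree_sub_le _ _).trans ?_)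
        exact max_le (by simp [degree_X]) (degree_C_le.trans (by norm_num))
      · rw [orthPoly]
        simp [coeff_C_mul, coeff_sub]
    | (k+2) =>
      obtain ⟨hd1, hc1⟩ := ih (k+1) (by omega)
      obtain ⟨hd0, hc0⟩ := ih k (by omega)
      constructor
      · rw [orthPoly]
        refine (degC_mul_le _ _).trans ((degree_sub_le _ _).trans ?_)
        refine max_le ((degree_mul_le _ _).trans ?_) ((degC_mul_le _ _).trans ?_)
        · calc (X - C (a (k+1))).degree + (orthPoly a b (k+1)).degree
              ≤ 1 + ((k+1 : ℕ) : WithBot ℕ) :=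
                add_le_add ((degree_sub_le _ _).trans
                  (max_le (by simp [degree_X]) (degree_C_le.trans (by norm_num)))) hd1
          _ ≤ ((k+2 : ℕ) : WithBot ℕ) := by
                rw [show ((1:WithBot ℕ)) = ((1:ℕ) : WithBot ℕ) from rfl, ← Nat.cast_add]
                exact Nat.cast_le.mpr (by omega)
        · exact hd0.trans (Nat.cast_le.mpr (by omega))
      · rw [orthPoly]
        have h1 : (orthPoly a b (k+1)).coeff (k+2) = 0 :=
          coeff_eq_zero_of_degree_lt (hd1.trans_lt (by exact_mod_cast Nat.lt_succ_self _))
        have h0 : (orthPoly a b k).coeff (k+2) = 0 :=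
          coeff_eq_zero_of_degree_lt (hd0.trans_lt (by exact_mod_cast by omega))
        rw [coeff_C_mul, coeff_sub, coeff_C_mul, h0, sub_mul, coeff_sub, coeff_C_mul, h1]
        rw [show (k+2) = (k+1)+1 from rfl, coeff_X_mul, hc1]
        rw [show ∏ i ∈ Finset.range (k+1+1), (b i)⁻¹
            = (∏ i ∈ Finset.range (k+1), (b i)⁻¹) * (b (k+1))⁻¹ from
          Finset.prod_range_succ _ _]
        ring

lemma indep (Q : ℕ → Polynomial ℝ) (hdeg : ∀ k, (Q k).degree ≤ k)
    (hl : ∀ k, (Q k).coeff k ≠ 0) :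
    ∀ n (a : ℕ → ℝ), (∑ i ∈ Finset.range n, C (a i) * Q i) = 0 → ∀ i < n, a i = 0 := by
  intro n
  induction n with
  | zero => intro a h i hi; omega
  | succ n ih =>
    intro a h
    have hn : a n = 0 := by
      have h' := congrArg (fun p => p.coeff n) h
      simp only [finset_sum_coeff, coeff_C_mul, coeff_zero] at h'
      rw [Finset.sum_range_succ] at h'
      have hz : ∀ i ∈ Finset.range n, a i * (Q i).coeff n = 0 := by
        intro i hi
        rw [coeff_eq_zero_of_degree_lt
          ((hdeg i).trans_lt (by exact_mod_cast Finset.mem_range.mp hi)), mul_zero]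
      rw [Finset.sum_eq_zero hz, zero_add] at h'
      exact (mul_eq_zero.mp h').resolve_right (hl n)
    have hrest : ∑ i ∈ Finset.range n, C (a i) * Q i = 0 := by
      rw [Finset.sum_range_succ, hn] at h; simpa using h
    intro i hi
    rcases Nat.lt_succ_iff_lt_or_eq.mp hi with h' | h'
    · exact ih a hrest i h'
    · rw [h']; exact hn

lemma orthPoly_recur (a b : ℕ → ℝ) (hb : ∀ k, b k ≠ 0) (k : ℕ) :
    X * orthPoly a b k =
      (if k = 0 then 0 else C (b (k-1)) * orthPoly a b (k-1))
        + C (a k) * orthPoly a b k + C (b k) * orthPoly a b (k+1) := by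
  cases k with
  | zero =>
    rw [if_pos rfl, zero_add,
        show orthPoly a b 1 = C (b 0)⁻¹ * (X - C (a 0)) from rfl,
        show orthPoly a b 0 = 1 from rfl,
        ← mul_assoc, ← C_mul, mul_inv_cancel₀ (hb 0), C_1, one_mul]
    ring
  | succ k =>
    rw [if_neg (Nat.succ_ne_zero k)]
    simp only [Nat.add_sub_cancel, Nat.succ_sub_one]
    rw [show orthPoly a b (k+2) = C (b (k+1))⁻¹ *
      ((X - C (a (k+1))) * orthPoly a b (k+1) - C (b k) * orthPoly a b k) from rfl,
        ← mul_assoc, ← C_mul, mul_inv_cancel₀ (hb (k+1)), C_1, one_mul]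
    ring


/-- The entries of the connection coefficient matrix `C_{J→D}` satisfy
`c 0 0 = 1`, `c i 0 = 0` for `i ≥ 1`, and the five-point discrete system
`β_{j−1} c_{i,j−1} + (α_j − γ_i) c_{ij} + β_j c_{i,j+1} − δ_{i−1} c_{i−1,j} − δ_i c_{i+1,j} = 0`
for `0 ≤ i < j`, with the convention that entries with index `−1` vanish. -/
theorem stmt0 (α β γ δ : ℕ → ℝ) (hβ : ∀ k, 0 < β k) (hδ : ∀ k, 0 < δ k)
    (c : ℕ → ℕ → ℝ)
    (hc : ∀ j, orthPoly α β j =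
      ∑ i ∈ Finset.range (j+1), Polynomial.C (c i j) * orthPoly γ δ i)
    (hc0 : ∀ i j, j < i → c i j = 0) :
    c 0 0 = 1 ∧ (∀ i, 1 ≤ i → c i 0 = 0) ∧
    ∀ i j : ℕ, i < j →
      β (j-1) * c i (j-1) + (α j - γ i) * c i j + β j * c i (j+1)
        - (if i = 0 then 0 else δ (i-1) * c (i-1) j) - δ i * c (i+1) j = 0 := by
  have hδ' : ∀ k, δ k ≠ 0 := fun k => (hδ k).ne'
  have hβ' : ∀ k, β k ≠ 0 := fun k => (hβ k).ne'
  have hQd : ∀ k, (orthPoly γ δ k).degree ≤ k := fun k => (orthPoly_deg_coeff γ δ k).1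
  have hQc : ∀ k, (orthPoly γ δ k).coeff k ≠ 0 := by
    intro k
    rw [(orthPoly_deg_coeff γ δ k).2]
    exact Finset.prod_ne_zero_iff.mpr fun i _ => inv_ne_zero (hδ' i)
  have hcext : ∀ jj n, jj < n →
      orthPoly α β jj = ∑ i ∈ Finset.range n, C (c i jj) * orthPoly γ δ i := by
    intro jj n hjn
    rw [hc jj]
    apply Finset.sum_subset (Finset.range_subset_range.mpr hjn)
    intro x hx hx'
    rw [hc0 x jj (by simp only [Finset.mem_range] at hx hx'; omega), map_zero, zero_mul]
  refine ⟨?_, ?_, ?_⟩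
  · have h0 := hc 0
    rw [Finset.sum_range_one, show orthPoly α β 0 = 1 from rfl,
        show orthPoly γ δ 0 = 1 from rfl, mul_one] at h0
    have := congrArg (fun p => p.coeff 0) h0
    simpa using this.symm
  · exact fun i hi => hc0 i 0 hi
  · intro i j hij
    obtain ⟨m, rfl⟩ : ∃ m, j = m + 1 := ⟨j - 1, by omega⟩
    simp only [Nat.add_sub_cancel]
    set Q : ℕ → Polynomial ℝ := orthPoly γ δ with hQ
    have E := orthPoly_recur α β hβ' (m+1)
    rw [if_neg (Nat.succ_ne_zero m)] at E
    simp only [Nat.add_sub_cancel] at E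
    rw [hcext (m+1) (m+3) (by omega), hcext m (m+3) (by omega),
        hcext (m+2) (m+3) (by omega)] at E
    -- Left side rewrite
    have L : X * (∑ i ∈ Finset.range (m+3), C (c i (m+1)) * Q i)
        = ∑ i ∈ Finset.range (m+3),
            C ((if i = 0 then 0 else δ (i-1) * c (i-1) (m+1))
              + γ i * c i (m+1) + δ i * c (i+1) (m+1)) * Q i := by
      rw [Finset.mul_sum]
      have step1 : ∀ i ∈ Finset.range (m+3), X * (C (c i (m+1)) * Q i)
          = C (c i (m+1)) * (if i = 0 then 0 else C (δ (i-1)) * Q (i-1))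
            + C (γ i * c i (m+1)) * Q i + C (δ i * c i (m+1)) * Q (i+1) := by
        intro i _
        have := orthPoly_recur γ δ hδ' i
        rw [← hQ] at this
        calc X * (C (c i (m+1)) * Q i) = C (c i (m+1)) * (X * Q i) := by ring
          _ = C (c i (m+1)) * ((if i = 0 then 0 else C (δ (i-1)) * Q (i-1))
              + C (γ i) * Q i + C (δ i) * Q (i+1)) := by rw [this]
          _ = _ := by rw [C_mul, C_mul]; ring
      rw [Finset.sum_congr rfl step1]
      rw [Finset.sum_add_distrib, Finset.sum_add_distrib]
      have S1 : ∑ i ∈ Finset.range (m+3),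
          C (c i (m+1)) * (if i = 0 then 0 else C (δ (i-1)) * Q (i-1))
          = ∑ i ∈ Finset.range (m+3), C (δ i * c (i+1) (m+1)) * Q i := by
        rw [Finset.sum_range_succ'
          (fun i => C (c i (m+1)) * (if i = 0 then 0 else C (δ (i-1)) * Q (i-1))) (m+2)]
        rw [Finset.sum_range_succ (fun i => C (δ i * c (i+1) (m+1)) * Q i) (m+2)]
        simp only []
        rw [if_true, mul_zero, add_zero, hc0 (m+2+1) (m+1) (by omega)]
        simp only [mul_zero, map_zero, zero_mul, add_zero]
        exact Finset.sum_congr rfl fun x _ => by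
          rw [if_neg (Nat.succ_ne_zero x), Nat.add_sub_cancel, C_mul]; ring
      have S3 : ∑ i ∈ Finset.range (m+3), C (δ i * c i (m+1)) * Q (i+1)
          = ∑ i ∈ Finset.range (m+3),
              C (if i = 0 then 0 else δ (i-1) * c (i-1) (m+1)) * Q i := by
        have h4 := Finset.sum_range_succ'
          (fun i => C (if i = 0 then 0 else δ (i-1) * c (i-1) (m+1)) * Q i) (m+3)
        rw [Finset.sum_range_succ
          (fun i => C (if i = 0 then 0 else δ (i-1) * c (i-1) (m+1)) * Q i) (m+3)] at h4
        simp only [] at h4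
        rw [if_true, map_zero, zero_mul, add_zero,
          if_neg (show ¬(m+3 = 0) by omega), (show m+3-1 = m+2 by omega),
          hc0 (m+2) (m+1) (by omega)] at h4
        simp only [mul_zero, map_zero, zero_mul, add_zero] at h4
        rw [h4]
        exact Finset.sum_congr rfl fun x _ => by
          rw [if_neg (Nat.succ_ne_zero x), Nat.add_sub_cancel]
      rw [S1, S3]
      rw [← Finset.sum_add_distrib, ← Finset.sum_add_distrib]
      exact Finset.sum_congr rfl fun i _ => by rw [map_add, map_add]; ring
    rw [L] at E
    -- Right side rewrite
    have R : C (β m) * (∑ i ∈ Finset.range (m+3), C (c i m) * Q i)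
        + C (α (m+1)) * (∑ i ∈ Finset.range (m+3), C (c i (m+1)) * Q i)
        + C (β (m+1)) * (∑ i ∈ Finset.range (m+3), C (c i (m+2)) * Q i)
        = ∑ i ∈ Finset.range (m+3),
            C (β m * c i m + α (m+1) * c i (m+1) + β (m+1) * c i (m+2)) * Q i := by
      rw [Finset.mul_sum, Finset.mul_sum, Finset.mul_sum,
        ← Finset.sum_add_distrib, ← Finset.sum_add_distrib]
      exact Finset.sum_congr rfl fun i _ => by
        rw [map_add, map_add, C_mul, C_mul, C_mul]; ring
    rw [R] at E
    have Ediff : ∑ i ∈ Finset.range (m+3),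
        C ((fun i => ((if i = 0 then 0 else δ (i-1) * c (i-1) (m+1))
              + γ i * c i (m+1) + δ i * c (i+1) (m+1))
            - (β m * c i m + α (m+1) * c i (m+1) + β (m+1) * c i (m+2))) i) * Q i = 0 := by
      simp only [map_sub, sub_mul]
      rw [Finset.sum_sub_distrib, ← E, sub_self]
    have key := indep Q hQd hQc (m+3) _ Ediff i (by omega)
    have key' : ((if i = 0 then 0 else δ (i-1) * c (i-1) (m+1))
          + γ i * c i (m+1) + δ i * c (i+1) (m+1))
        - (β m * c i m + α (m+1) * c i (m+1) + β (m+1) * c i (m+2)) = 0 := key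
    split_ifs at key' ⊢ <;> linarith

end
end

section
/- Let J and D be Jacobi operators and C = C_{J→D} their connection coefficient matrix, all regarded as linear endomorphisms of the space of finitely supported real sequences (J and D act tridiagonally; C acts by matrix–vector multiplication, which is well defined since C is upper triangular with finitely supported columns). Then for every polynomial p ∈ ℝ[X], C ∘ p(J) = p(D) ∘ C as endomorphisms of finitely supported sequences, where p(J) and p(D) are given by the polynomial functional calculus. In particular C(Jv) = D(Cv) for every finitely supported sequence v. -/
open Polynomial MeasureTheory Filter Topology

noncomputable section

/-- The tridiagonal action of a Jacobi operator on all real sequences, as a linear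
endomorphism of the space of real sequences. -/
def jacobiEnd (a b : ℕ → ℝ) : Module.End ℝ (ℕ → ℝ) where
  toFun v := fun k => (if k = 0 then 0 else b (k-1) * v (k-1)) + a k * v k + b k * v (k+1)
  map_add' u v := by funext k; by_cases h : k = 0 <;> simp [h] <;> ring
  map_smul' r v := by funext k; by_cases h : k = 0 <;> simp [h] <;> ring

/-- Matrix–vector multiplication of an infinite matrix against a sequence (a genuine finite
sum whenever the sequence is finitely supported). -/
def matVec (c : ℕ → ℕ → ℝ) (v : ℕ → ℝ) : ℕ → ℝ := fun i => ∑' j, c i j * v j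

namespace JacAux

/-- row of the Jacobi matrix corresponding to basis vector `j` (image of `e_j`). -/
def jrow (a b : ℕ → ℝ) : ℕ → (ℕ →₀ ℝ)
  | 0 => Finsupp.single 0 (a 0) + Finsupp.single 1 (b 0)
  | (j+1) => Finsupp.single j (b j) + Finsupp.single (j+1) (a (j+1))
      + Finsupp.single (j+2) (b (j+1))

def Jlin (a b : ℕ → ℝ) : (ℕ →₀ ℝ) →ₗ[ℝ] (ℕ →₀ ℝ) :=
  Finsupp.linearCombination ℝ (jrow a b)

def crow (c : ℕ → ℕ → ℝ) (j : ℕ) : ℕ →₀ ℝ :=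
  ∑ i ∈ Finset.range (j+1), Finsupp.single i (c i j)

def Clin (c : ℕ → ℕ → ℝ) : (ℕ →₀ ℝ) →ₗ[ℝ] (ℕ →₀ ℝ) :=
  Finsupp.linearCombination ℝ (crow c)

def Emap (a b : ℕ → ℝ) : (ℕ →₀ ℝ) →ₗ[ℝ] Polynomial ℝ :=
  Finsupp.linearCombination ℝ (orthPoly a b)

lemma Emap_single (a b : ℕ → ℝ) (j : ℕ) (r : ℝ) :
    Emap a b (Finsupp.single j r) = r • orthPoly a b j :=
  Finsupp.linearCombination_single _ _ _

lemma E_jrow (a b : ℕ → ℝ) (hb : ∀ k, b k ≠ 0) (j : ℕ) :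
    Emap a b (jrow a b j) = Polynomial.X * orthPoly a b j := by
  cases j with
  | zero =>
      simp only [jrow, map_add, Emap_single, Polynomial.smul_eq_C_mul]
      show _ = Polynomial.X * orthPoly a b 0
      rw [show orthPoly a b 1 = Polynomial.C (b 0)⁻¹ *
        (Polynomial.X - Polynomial.C (a 0)) from rfl]
      rw [← mul_assoc, ← Polynomial.C_mul, mul_inv_cancel₀ (hb 0)]
      simp [orthPoly]
  | succ k =>
      simp only [jrow, map_add, Emap_single, Polynomial.smul_eq_C_mul]
      rw [show orthPoly a b (k+2) = Polynomial.C (b (k+1))⁻¹ *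
        ((Polynomial.X - Polynomial.C (a (k+1))) * orthPoly a b (k+1)
          - Polynomial.C (b k) * orthPoly a b k) from rfl]
      rw [← mul_assoc, ← Polynomial.C_mul, mul_inv_cancel₀ (hb (k+1)), Polynomial.C_1,
        one_mul]
      ring

lemma E_J (a b : ℕ → ℝ) (hb : ∀ k, b k ≠ 0) (f : ℕ →₀ ℝ) :
    Emap a b (Jlin a b f) = Polynomial.X * Emap a b f := by
  induction f using Finsupp.induction_linear with
  | zero => simp
  | add f g hf hg => simp only [map_add, hf, hg]; ring
  | single j r =>
      rw [Jlin, Finsupp.linearCombination_single, _root_.map_smul, E_jrow a b hb,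
        Emap_single, mul_smul_comm]

/-- degree and positivity of the leading coefficient of orthPoly. -/
lemma orthPoly_deg (a b : ℕ → ℝ) (hb : ∀ k, 0 < b k) :
    ∀ k, (orthPoly a b k).natDegree ≤ k ∧ 0 < (orthPoly a b k).coeff k := by
  intro k
  induction k using Nat.strong_induction_on with
  | _ k ih =>
    match k with
    | 0 => simp [orthPoly]
    | 1 =>
        constructor
        · rw [show orthPoly a b 1 = Polynomial.C (b 0)⁻¹ *
            (Polynomial.X - Polynomial.C (a 0)) from rfl]
          exact (Polynomial.natDegree_C_mul_le _ _).trans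
            (le_of_eq (Polynomial.natDegree_X_sub_C _))
        · rw [show orthPoly a b 1 = Polynomial.C (b 0)⁻¹ *
            (Polynomial.X - Polynomial.C (a 0)) from rfl]
          simp [Polynomial.coeff_C_mul, Polynomial.coeff_sub]
          have := hb 0
          positivity
    | (k+2) =>
        obtain ⟨d1, c1⟩ := ih (k+1) (by omega)
        obtain ⟨d0, _⟩ := ih k (by omega)
        have hre : orthPoly a b (k+2) = Polynomial.C (b (k+1))⁻¹ *
          ((Polynomial.X - Polynomial.C (a (k+1))) * orthPoly a b (k+1)
            - Polynomial.C (b k) * orthPoly a b k) := rfl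
        constructor
        · rw [hre]
          refine (Polynomial.natDegree_C_mul_le _ _).trans ?_
          refine (Polynomial.natDegree_sub_le _ _).trans ?_
          refine max_le ?_ ?_
          · refine (Polynomial.natDegree_mul_le).trans ?_
            rw [Polynomial.natDegree_X_sub_C]
            omega
          · refine (Polynomial.natDegree_C_mul_le _ _).trans (by omega)
        · rw [hre, Polynomial.coeff_C_mul, Polynomial.coeff_sub, sub_mul,
            Polynomial.coeff_sub, Polynomial.coeff_X_mul, Polynomial.coeff_C_mul,
            Polynomial.coeff_C_mul]
          have z1 : (orthPoly a b (k+1)).coeff (k+2) = 0 :=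
            Polynomial.coeff_eq_zero_of_natDegree_lt (by omega)
          have z0 : (orthPoly a b k).coeff (k+2) = 0 :=
            Polynomial.coeff_eq_zero_of_natDegree_lt (by omega)
          rw [z1, z0]
          simp only [mul_zero, sub_zero]
          exact mul_pos (inv_pos.mpr (hb (k+1))) c1

lemma E_inj (a b : ℕ → ℝ) (hb : ∀ k, 0 < b k) : Function.Injective (Emap a b) := by
  have key : ∀ f : ℕ →₀ ℝ, Emap a b f = 0 → f = 0 := by
    intro f hf
    by_contra hne
    have hs : f.support.Nonempty := Finsupp.support_nonempty_iff.mpr hne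
    set m := f.support.max' hs with hmdef
    have hm : f m ≠ 0 := Finsupp.mem_support_iff.mp (f.support.max'_mem hs)
    have hco : (Emap a b f).coeff m = f m * (orthPoly a b m).coeff m := by
      rw [Emap, Finsupp.linearCombination_apply, Finsupp.sum, Polynomial.finset_sum_coeff]
      rw [Finset.sum_eq_single m]
      · rw [Polynomial.coeff_smul, smul_eq_mul]
      · intro j hj hjm
        have hjlt : j < m := lt_of_le_of_ne (Finset.le_max' _ _ hj) hjm
        have hd : (orthPoly a b j).natDegree < m :=
          lt_of_le_of_lt (orthPoly_deg a b hb j).1 hjlt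
        rw [Polynomial.coeff_smul, Polynomial.coeff_eq_zero_of_natDegree_lt hd, smul_zero]
      · intro h; exact absurd (f.support.max'_mem hs) h
    rw [hf, Polynomial.coeff_zero] at hco
    exact hm (by
      have := (orthPoly_deg a b hb m).2
      rcases mul_eq_zero.mp hco.symm with h | h
      · exact h
      · exact absurd h (ne_of_gt this))
  intro f g h
  have := key (f - g) (by rw [map_sub, h, sub_self])
  exact sub_eq_zero.mp this

lemma comm_aeval {M N : Type} [AddCommGroup M] [Module ℝ M] [AddCommGroup N] [Module ℝ N]
    (L : M →ₗ[ℝ] N) (A : Module.End ℝ M) (B : Module.End ℝ N)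
    (h : ∀ x, L (A x) = B (L x)) (p : Polynomial ℝ) (x : M) :
    L ((Polynomial.aeval A p) x) = (Polynomial.aeval B p) (L x) := by
  have hpow : ∀ n x, L ((A^n) x) = (B^n) (L x) := by
    intro n
    induction n with
    | zero => intro x; simp
    | succ n ih =>
        intro x
        rw [pow_succ, pow_succ, Module.End.mul_apply, Module.End.mul_apply, ih, h]
  induction p using Polynomial.induction_on' with
  | add p q hp hq => simp only [map_add, LinearMap.add_apply, map_add, hp, hq]
  | monomial n r =>
      simp only [Polynomial.aeval_monomial, Module.End.mul_apply,
        Module.algebraMap_end_apply, _root_.map_smul, hpow]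

lemma jacobi_coe (a b : ℕ → ℝ) (f : ℕ →₀ ℝ) :
    (⇑(Jlin a b f) : ℕ → ℝ) = jacobiEnd a b ⇑f := by
  induction f using Finsupp.induction_linear with
  | zero => simp
  | add f g hf hg => simp [map_add, hf, hg]
  | single j r =>
      rw [Jlin, Finsupp.linearCombination_single]
      funext k
      show (r • jrow a b j) k = _
      rw [Finsupp.smul_apply, smul_eq_mul]
      show _ = (if k = 0 then 0 else b (k-1) * (Finsupp.single j r) (k-1))
        + a k * (Finsupp.single j r) k + b k * (Finsupp.single j r) (k+1)
      cases j with
      | zero =>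
          cases k with
          | zero => simp [jrow, Finsupp.single_apply]; ring
          | succ k => simp [jrow, Finsupp.single_apply]
                      split_ifs <;> simp_all <;> ring
      | succ j =>
          cases k with
          | zero => simp [jrow, Finsupp.single_apply]
                    split_ifs <;> simp_all <;> ring
          | succ k => simp [jrow, Finsupp.single_apply]
                      split_ifs <;> simp_all <;> try ring

lemma crow_apply (c : ℕ → ℕ → ℝ) (hc0 : ∀ i j, j < i → c i j = 0) (j i : ℕ) :
    crow c j i = c i j := by
  rw [crow, Finsupp.finset_sum_apply]
  simp only [Finsupp.single_apply]
  rw [Finset.sum_ite_eq']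
  split_ifs with h
  · rfl
  · exact (hc0 i j (by simp at h; omega)).symm

lemma matVec_coe (c : ℕ → ℕ → ℝ) (hc0 : ∀ i j, j < i → c i j = 0) (f : ℕ →₀ ℝ) :
    matVec c ⇑f = ⇑(Clin c f) := by
  funext i
  rw [matVec]
  rw [tsum_eq_sum (s := f.support)
    (by intro j hj; rw [Finsupp.notMem_support_iff.mp hj, mul_zero])]
  rw [Clin, Finsupp.linearCombination_apply, Finsupp.sum_apply, Finsupp.sum]
  refine Finset.sum_congr rfl fun j _ => ?_
  rw [Finsupp.smul_apply, smul_eq_mul, crow_apply c hc0, mul_comm]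

lemma E_crow (α β γ δ : ℕ → ℝ) (c : ℕ → ℕ → ℝ)
    (hc : ∀ j, orthPoly α β j =
      ∑ i ∈ Finset.range (j+1), Polynomial.C (c i j) * orthPoly γ δ i) (j : ℕ) :
    Emap γ δ (crow c j) = orthPoly α β j := by
  rw [crow, map_sum, hc j]
  refine Finset.sum_congr rfl fun i _ => ?_
  rw [Emap_single, Polynomial.smul_eq_C_mul]

lemma E_C (α β γ δ : ℕ → ℝ) (c : ℕ → ℕ → ℝ)
    (hc : ∀ j, orthPoly α β j =
      ∑ i ∈ Finset.range (j+1), Polynomial.C (c i j) * orthPoly γ δ i) (f : ℕ →₀ ℝ) :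
    Emap γ δ (Clin c f) = Emap α β f := by
  induction f using Finsupp.induction_linear with
  | zero => simp
  | add f g hf hg => simp [map_add, hf, hg]
  | single j r =>
      rw [Clin, Finsupp.linearCombination_single, _root_.map_smul,
        E_crow α β γ δ c hc, Emap_single]

end JacAux

open JacAux in
/-- As operators on finitely supported sequences, `C p(J) = p(D) C` for every
polynomial `p`; in particular `C (J v) = D (C v)`. -/
theorem stmt2 (α β γ δ : ℕ → ℝ) (hβ : ∀ k, 0 < β k) (hδ : ∀ k, 0 < δ k)
    (c : ℕ → ℕ → ℝ)
    (hc : ∀ j, orthPoly α β j =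
      ∑ i ∈ Finset.range (j+1), Polynomial.C (c i j) * orthPoly γ δ i)
    (hc0 : ∀ i j, j < i → c i j = 0) :
    (∀ p : Polynomial ℝ, ∀ v : ℕ → ℝ, (Function.support v).Finite →
      matVec c ((Polynomial.aeval (jacobiEnd α β) p) v)
        = (Polynomial.aeval (jacobiEnd γ δ) p) (matVec c v)) ∧
    (∀ v : ℕ → ℝ, (Function.support v).Finite →
      matVec c (jacobiEnd α β v) = jacobiEnd γ δ (matVec c v)) := by
  have hb : ∀ k, β k ≠ 0 := fun k => ne_of_gt (hβ k)
  have hd : ∀ k, δ k ≠ 0 := fun k => ne_of_gt (hδ k)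
  have key : ∀ f, Clin c (Jlin α β f) = Jlin γ δ (Clin c f) := by
    intro f
    apply E_inj γ δ hδ
    rw [E_C α β γ δ c hc, E_J α β hb, E_J γ δ hd, E_C α β γ δ c hc]
  have main : ∀ p : Polynomial ℝ, ∀ v : ℕ → ℝ, (Function.support v).Finite →
      matVec c ((Polynomial.aeval (jacobiEnd α β) p) v)
        = (Polynomial.aeval (jacobiEnd γ δ) p) (matVec c v) := by
    intro p v hv
    set f := Finsupp.ofSupportFinite v hv with hfdef
    have hvf : ⇑f = v := rfl
    rw [← hvf]
    have h1 : (Polynomial.aeval (jacobiEnd α β) p) ⇑f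
        = ⇑((Polynomial.aeval (Jlin α β) p) f) :=
      (comm_aeval (Finsupp.lcoeFun) (Jlin α β) (jacobiEnd α β)
        (fun g => (jacobi_coe α β g)) p f).symm
    have h2 : (Polynomial.aeval (jacobiEnd γ δ) p) ⇑(Clin c f)
        = ⇑((Polynomial.aeval (Jlin γ δ) p) (Clin c f)) :=
      (comm_aeval (Finsupp.lcoeFun) (Jlin γ δ) (jacobiEnd γ δ)
        (fun g => (jacobi_coe γ δ g)) p (Clin c f)).symm
    have h3 : Clin c ((Polynomial.aeval (Jlin α β) p) f)
        = (Polynomial.aeval (Jlin γ δ) p) (Clin c f) :=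
      comm_aeval (Clin c) (Jlin α β) (Jlin γ δ) key p f
    rw [h1, matVec_coe c hc0, h3, matVec_coe c hc0, h2]
  refine ⟨main, fun v hv => ?_⟩
  have := main Polynomial.X v hv
  simpa using this


end
end

section
/- Let J and D be Jacobi operators with spectral measures μ and ν respectively, and let (c_{0k})_{k≥0} be the first row of the connection coefficient matrix C = C_{J→D}. Then ν is absolutely continuous with respect to μ with Radon–Nikodym derivative dν/dμ ∈ L²(μ) if and only if Σ_{k=0}^∞ c_{0k}² < ∞; and in that case dν/dμ = Σ_{k=0}^∞ c_{0k} P_k, the series converging in L²(μ). -/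
open Polynomial MeasureTheory Filter Topology
open scoped NNReal ENNReal

noncomputable section

namespace Stmt3Aux


lemma orthPoly_deg_coeff (a b : ℕ → ℝ) :
    ∀ n, (orthPoly a b n).natDegree ≤ n ∧
      (orthPoly a b n).coeff n = (∏ i ∈ Finset.range n, b i)⁻¹ := by
  intro n
  induction n using Nat.strong_induction_on with
  | _ n ih =>
    match n with
    | 0 => simp [orthPoly]
    | 1 =>
      constructor
      · refine (natDegree_C_mul_le _ _).trans ?_
        simp [natDegree_X_sub_C]
      · simp [orthPoly, coeff_C_mul, coeff_sub]
    | (k+2) =>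
      obtain ⟨hd1, hc1⟩ := ih (k+1) (by omega)
      obtain ⟨hd0, hc0⟩ := ih k (by omega)
      constructor
      · show natDegree (Polynomial.C (b (k+1))⁻¹ * _) ≤ k + 2
        refine (natDegree_C_mul_le _ _).trans ?_
        refine (natDegree_sub_le _ _).trans ?_
        refine max_le ?_ ?_
        · refine (natDegree_mul_le).trans ?_
          have : (X - Polynomial.C (a (k+1))).natDegree = 1 := natDegree_X_sub_C _
          omega
        · refine (natDegree_C_mul_le _ _).trans (by omega)
      · show (Polynomial.C (b (k+1))⁻¹ * _).coeff (k+2) = _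
        have hz1 : (orthPoly a b (k+1)).coeff (k+2) = 0 :=
          coeff_eq_zero_of_natDegree_lt (lt_of_le_of_lt hd1 (by omega))
        have hz0 : (orthPoly a b k).coeff (k+2) = 0 :=
          coeff_eq_zero_of_natDegree_lt (lt_of_le_of_lt hd0 (by omega))
        rw [coeff_C_mul, coeff_sub, coeff_C_mul, sub_mul, coeff_sub, coeff_X_mul, coeff_C_mul,
          hz1, hz0, hc1]
        have hpr : ∏ i ∈ Finset.range (k+2), b i
            = (∏ i ∈ Finset.range (k+1), b i) * b (k+1) := Finset.prod_range_succ _ _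
        rw [hpr, mul_inv]
        ring

lemma pow_mem_span (a b : ℕ → ℝ) (hb : ∀ k, 0 < b k) :
    ∀ n, (X : Polynomial ℝ)^n ∈ Submodule.span ℝ (Set.range (orthPoly a b)) := by
  intro n
  induction n using Nat.strong_induction_on with
  | _ n ih =>
    have hP : orthPoly a b n ∈ Submodule.span ℝ (Set.range (orthPoly a b)) :=
      Submodule.subset_span ⟨n, rfl⟩
    set L : ℝ := ∏ i ∈ Finset.range n, b i with hL
    have hLpos : 0 < L := Finset.prod_pos (fun i _ => hb i)
    set q : Polynomial ℝ := Polynomial.C L * orthPoly a b n - X^n with hq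
    obtain ⟨hdeg, hcoeff⟩ := orthPoly_deg_coeff a b n
    have hqdeg : q.natDegree ≤ n := by
      refine (natDegree_sub_le _ _).trans (max_le ((natDegree_C_mul_le _ _).trans hdeg) ?_)
      simp
    have hqn : q.coeff n = 0 := by
      rw [hq, coeff_sub, coeff_C_mul, hcoeff, coeff_X_pow, ← hL]
      simp [mul_inv_cancel₀ (ne_of_gt hLpos)]
    have hqlt : q.natDegree < n ∨ q = 0 := by
      rcases eq_or_ne q 0 with h | h
      · exact Or.inr h
      · left
        rcases lt_or_eq_of_le hqdeg with h2 | h2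
        · exact h2
        · exfalso
          have := Polynomial.leadingCoeff_ne_zero.mpr h
          rw [leadingCoeff, h2] at this
          exact this hqn
    have hqmem : q ∈ Submodule.span ℝ (Set.range (orthPoly a b)) := by
      rcases hqlt with h | h
      · rw [Polynomial.as_sum_range' q n h]
        refine Submodule.sum_mem _ (fun i hi => ?_)
        rw [← Polynomial.smul_X_eq_monomial]
        exact Submodule.smul_mem _ _ (ih i (Finset.mem_range.mp hi))
      · rw [h]; exact Submodule.zero_mem _
    have : (X:Polynomial ℝ)^n = Polynomial.C L * orthPoly a b n - q := by rw [hq]; ring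
    rw [this, ← Polynomial.smul_eq_C_mul]
    exact Submodule.sub_mem _ (Submodule.smul_mem _ _ hP) hqmem

lemma poly_mem_span (a b : ℕ → ℝ) (hb : ∀ k, 0 < b k) (p : Polynomial ℝ) :
    p ∈ Submodule.span ℝ (Set.range (orthPoly a b)) := by
  rw [Polynomial.as_sum_range_C_mul_X_pow p]
  refine Submodule.sum_mem _ (fun i _ => ?_)
  rw [Polynomial.C_mul']
  exact Submodule.smul_mem _ _ (pow_mem_span a b hb i)


variable {E : Type*} [NormedAddCommGroup E] [InnerProductSpace ℝ E]


variable {E : Type*} [NormedAddCommGroup E] [InnerProductSpace ℝ E]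

lemma norm_sum_sq {e : ℕ → E} (he : Orthonormal ℝ e) (c : ℕ → ℝ) (t : Finset ℕ) :
    ‖∑ k ∈ t, c k • e k‖ ^ 2 = ∑ k ∈ t, (c k) ^ 2 := by
  rw [← real_inner_self_eq_norm_sq, sum_inner]
  refine Finset.sum_congr rfl (fun i hi => ?_)
  rw [real_inner_smul_left, he.inner_right_sum c hi, sq]

lemma summable_smul_of_sq_summable [CompleteSpace E] {e : ℕ → E} (he : Orthonormal ℝ e)
    {c : ℕ → ℝ} (hc : Summable fun k => (c k) ^ 2) :
    Summable fun k => c k • e k := by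
  rw [summable_iff_cauchySeq_finset, cauchySeq_finset_iff_vanishing_norm]
  intro ε hε
  have hv := summable_iff_vanishing.mp hc (Set.Ioo (-(ε^2)) (ε^2)) (Ioo_mem_nhds (by nlinarith) (by positivity))
  obtain ⟨s, hs⟩ := hv
  refine ⟨s, fun t ht => ?_⟩
  have h1 := (hs t ht).2
  have h2 : ‖∑ k ∈ t, c k • e k‖ ^ 2 < ε ^ 2 := by rwa [norm_sum_sq he]
  exact lt_of_pow_lt_pow_left₀ 2 (le_of_lt hε) h2


variable {E : Type*} [NormedAddCommGroup E] [InnerProductSpace ℝ E]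

lemma inner_hasSum {e : ℕ → E} (he : Orthonormal ℝ e) {c : ℕ → ℝ} {F : E}
    (hF : HasSum (fun k => c k • e k) F) (k : ℕ) : inner ℝ (e k) F = c k := by
  have h := (innerSL ℝ (e k)).hasSum hF
  have h2 : (fun i => (innerSL ℝ (e k)) (c i • e i)) = fun i => if i = k then c k else 0 := by
    funext i
    simp only [innerSL_apply_apply, real_inner_smul_right]
    rw [orthonormal_iff_ite.mp he k i]
    by_cases hik : i = k
    · subst hik; simp
    · simp [hik, Ne.symm hik]
  rw [h2] at h
  have := (h.unique (hasSum_ite_eq k (c k)))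
  simpa using this




lemma ae_mem_of_null_compl {m : Measure ℝ} {s : Set ℝ} (h0 : m sᶜ = 0) :
    ∀ᵐ x ∂m, x ∈ s := by
  rw [ae_iff]; exact h0

lemma integrable_of_compactSupport {m : Measure ℝ} [IsFiniteMeasure m] {s : Set ℝ}
    (hs : IsCompact s) (h0 : m sᶜ = 0) {g : ℝ → ℝ} (hg : Continuous g) :
    Integrable g m := by
  obtain ⟨C, hC⟩ := hs.exists_bound_of_continuousOn hg.continuousOn
  refine Integrable.mono' (integrable_const C) hg.aestronglyMeasurable ?_
  filter_upwards [ae_mem_of_null_compl h0] with x hx using hC x hx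

lemma poly_approx {K : Set ℝ} (hK : IsCompact K) (g : ℝ → ℝ) (hg : Continuous g)
    {ε : ℝ} (hε : 0 < ε) : ∃ p : Polynomial ℝ, ∀ x ∈ K, |g x - p.eval x| ≤ ε := by
  haveI : CompactSpace K := isCompact_iff_compactSpace.mp hK
  set gK : C(K, ℝ) := ContinuousMap.restrict K ⟨g, hg⟩ with hgK
  have hmem : gK ∈ closure (polynomialFunctions K : Set C(K, ℝ)) := by
    have h1 : gK ∈ (polynomialFunctions K).topologicalClosure := by
      rw [polynomialFunctions.topologicalClosure K]; trivial
    exact h1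
  rw [Metric.mem_closure_iff] at hmem
  obtain ⟨q, hq, hdist⟩ := hmem ε hε
  rw [SetLike.mem_coe, polynomialFunctions, Subalgebra.mem_map] at hq
  obtain ⟨p, -, hp⟩ := hq
  refine ⟨p, fun x hx => ?_⟩
  have h2 : dist (gK ⟨x, hx⟩) (q ⟨x, hx⟩) ≤ dist gK q := ContinuousMap.dist_apply_le_dist _
  have h3 : q ⟨x, hx⟩ = p.eval x := by rw [← hp]; rfl
  have h4 : gK ⟨x, hx⟩ = g x := rfl
  rw [h3, h4, Real.dist_eq] at h2
  exact h2.trans (le_of_lt hdist)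

/-- From agreement on polynomials to agreement on bounded continuous functions. -/
lemma integral_eq_of_poly {μ ν : Measure ℝ} [IsProbabilityMeasure μ] [IsProbabilityMeasure ν]
    {sμ sν : Set ℝ} (hsμc : IsCompact sμ) (hsμ0 : μ sμᶜ = 0)
    (hsνc : IsCompact sν) (hsν0 : ν sνᶜ = 0)
    {f : ℝ → ℝ} (hf : Integrable f μ)
    (hpoly : ∀ p : Polynomial ℝ, ∫ x, p.eval x ∂ν = ∫ x, p.eval x * f x ∂μ)
    (g : ℝ → ℝ) (Cg : ℝ) (hgc : Continuous g) (hgb : ∀ x, |g x| ≤ Cg) :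
    ∫ x, g x ∂ν = ∫ x, g x * f x ∂μ := by
  set K : Set ℝ := sμ ∪ sν with hK
  have hKc : IsCompact K := hsμc.union hsνc
  have hKμ : μ Kᶜ = 0 :=
    measure_mono_null (Set.compl_subset_compl.mpr Set.subset_union_left) hsμ0
  have hKν : ν Kᶜ = 0 :=
    measure_mono_null (Set.compl_subset_compl.mpr Set.subset_union_right) hsν0
  set D : ℝ := 1 + ∫ x, |f x| ∂μ with hD
  have hD1 : 0 ≤ ∫ x, |f x| ∂μ := integral_nonneg (fun x => abs_nonneg _)
  have hDpos : 0 < D := by rw [hD]; linarith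
  have hgν : Integrable g ν := integrable_of_compactSupport hsνc hsν0 hgc
  have hgfμ : Integrable (fun x => g x * f x) μ :=
    hf.bdd_mul hgc.aestronglyMeasurable (ae_of_all μ fun x => by
      simpa [Real.norm_eq_abs] using hgb x)
  have key : ∀ ε : ℝ, 0 < ε →
      |(∫ x, g x ∂ν) - ∫ x, g x * f x ∂μ| ≤ ε * D := by
    intro ε hε
    obtain ⟨p, hp⟩ := poly_approx hKc g hgc hε
    have hpν : Integrable (fun x => p.eval x) ν :=
      integrable_of_compactSupport hsνc hsν0 p.continuous
    obtain ⟨Cp, hCp⟩ := hKc.exists_bound_of_continuousOn p.continuous.continuousOn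
    have hpfμ : Integrable (fun x => p.eval x * f x) μ :=
      hf.bdd_mul p.continuous.aestronglyMeasurable (by
        filter_upwards [ae_mem_of_null_compl (s := K) hKμ] with x hx using hCp x hx)
    have est1 : |(∫ x, g x ∂ν) - ∫ x, p.eval x ∂ν| ≤ ε := by
      rw [← integral_sub hgν hpν]
      have := norm_integral_le_of_norm_le (f := fun x => g x - p.eval x) (μ := ν) (integrable_const ε) (by
        filter_upwards [ae_mem_of_null_compl (s := K) hKν] with x hx
        simpa [Real.norm_eq_abs] using hp x hx)
      simpa [Real.norm_eq_abs] using this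
    have est2 : |(∫ x, p.eval x * f x ∂μ) - ∫ x, g x * f x ∂μ| ≤ ε * (D - 1) := by
      rw [← integral_sub hpfμ hgfμ]
      have hb : ∀ᵐ x ∂μ, ‖p.eval x * f x - g x * f x‖ ≤ ε * |f x| := by
        filter_upwards [ae_mem_of_null_compl (s := K) hKμ] with x hx
        have : p.eval x * f x - g x * f x = (p.eval x - g x) * f x := by ring
        rw [this, Real.norm_eq_abs, abs_mul]
        have h5 : |p.eval x - g x| ≤ ε := by
          have := hp x hx; rw [abs_sub_comm] at this; exact this
        exact mul_le_mul_of_nonneg_right h5 (abs_nonneg _)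
      have := norm_integral_le_of_norm_le (hf.abs.const_mul ε) hb
      rw [integral_const_mul] at this
      simpa [Real.norm_eq_abs, hD] using this
    have hsplit : (∫ x, g x ∂ν) - ∫ x, g x * f x ∂μ
        = ((∫ x, g x ∂ν) - ∫ x, p.eval x ∂ν)
          + ((∫ x, p.eval x * f x ∂μ) - ∫ x, g x * f x ∂μ) := by
      rw [hpoly p]; ring
    calc |(∫ x, g x ∂ν) - ∫ x, g x * f x ∂μ| ≤ _ + _ := by rw [hsplit]; exact abs_add_le _ _
      _ ≤ ε + ε * (D - 1) := add_le_add est1 est2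
      _ = ε * D := by ring
  by_contra hne
  have habs : 0 < |(∫ x, g x ∂ν) - ∫ x, g x * f x ∂μ| := by
    rcases eq_or_ne ((∫ x, g x ∂ν) - ∫ x, g x * f x ∂μ) 0 with h | h
    · exact absurd (by linarith [sub_eq_zero.mp h]) hne
    · exact abs_pos.mpr h
  set A := |(∫ x, g x ∂ν) - ∫ x, g x * f x ∂μ|
  have := key (A / (2 * D)) (by positivity)
  have : A ≤ A / 2 := by
    calc A ≤ A / (2 * D) * D := this
      _ = A / 2 := by field_simp
  linarith


lemma ofReal_max_zero (t : ℝ) : ENNReal.ofReal (max t 0) = ENNReal.ofReal t := by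
  rcases le_total t 0 with h | h
  · rw [max_eq_right h, ENNReal.ofReal_zero, ENNReal.ofReal_of_nonpos h]
  · rw [max_eq_left h]

lemma max_add_max_neg (t : ℝ) : t + max (-t) 0 = max t 0 := by
  rcases le_total t 0 with h | h
  · rw [max_eq_left (by linarith : (0:ℝ) ≤ -t), max_eq_right h]; ring
  · rw [max_eq_right (by linarith : -t ≤ (0:ℝ)), max_eq_left h]; ring

lemma rnDeriv_eq_of_poly {μ ν : Measure ℝ} [IsProbabilityMeasure μ] [IsProbabilityMeasure ν]
    {sμ sν : Set ℝ} (hsμc : IsCompact sμ) (hsμ0 : μ sμᶜ = 0)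
    (hsνc : IsCompact sν) (hsν0 : ν sνᶜ = 0)
    {f : ℝ → ℝ} (hfm : Measurable f) (hf : Integrable f μ)
    (hpoly : ∀ p : Polynomial ℝ, ∫ x, p.eval x ∂ν = ∫ x, p.eval x * f x ∂μ) :
    ν ≪ μ ∧ (fun x => (ν.rnDeriv μ x).toReal) =ᵐ[μ] f := by
  have hbc := integral_eq_of_poly hsμc hsμ0 hsνc hsν0 hf hpoly
  set dplus : Measure ℝ := μ.withDensity (fun x => ENNReal.ofReal (f x)) with hdp
  set dminus : Measure ℝ := μ.withDensity (fun x => ENNReal.ofReal (-f x)) with hdm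
  haveI : IsFiniteMeasure dplus := isFiniteMeasure_withDensity hf.lintegral_lt_top.ne
  haveI : IsFiniteMeasure dminus := isFiniteMeasure_withDensity hf.neg.lintegral_lt_top.ne
  have hmeq : ν + dminus = dplus := by
    refine ext_of_forall_lintegral_eq_of_IsFiniteMeasure (fun f₀ => ?_)
    have hcoe : Measurable fun x => ((f₀ x : ℝ≥0) : ℝ≥0∞) :=
      measurable_coe_nnreal_ennreal.comp f₀.continuous.measurable
    have hcoec : Continuous fun x => ((f₀ x : ℝ≥0) : ℝ) :=
      NNReal.continuous_coe.comp f₀.continuous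
    obtain ⟨Cb, hCb⟩ : ∃ C, ∀ x y, dist (f₀ x) (f₀ y) ≤ C := f₀.bounded
    have hcoeb : ∀ x, |((f₀ x : ℝ≥0) : ℝ)| ≤ Cb + ((f₀ 0 : ℝ≥0) : ℝ) := by
      intro x
      rw [abs_of_nonneg (NNReal.coe_nonneg _)]
      have h6 : dist (f₀ x) (f₀ 0) ≤ Cb := hCb x 0
      rw [NNReal.dist_eq] at h6
      have := abs_sub_abs_le_abs_sub ((f₀ x : ℝ≥0) : ℝ) ((f₀ 0 : ℝ≥0) : ℝ)
      rw [abs_of_nonneg (NNReal.coe_nonneg _), abs_of_nonneg (NNReal.coe_nonneg _)] at this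
      linarith
    have i1 : Integrable (fun x => ((f₀ x : ℝ≥0) : ℝ)) ν :=
      integrable_of_compactSupport hsνc hsν0 hcoec
    have iplus : Integrable (fun x => ((f₀ x : ℝ≥0) : ℝ) * max (f x) 0) μ :=
      hf.pos_part.bdd_mul hcoec.aestronglyMeasurable
        (ae_of_all _ fun x => by simpa [Real.norm_eq_abs] using hcoeb x)
    have iminus : Integrable (fun x => ((f₀ x : ℝ≥0) : ℝ) * max (-f x) 0) μ :=
      hf.neg.pos_part.bdd_mul hcoec.aestronglyMeasurable
        (ae_of_all _ fun x => by simpa [Real.norm_eq_abs] using hcoeb x)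
    have if2 : Integrable (fun x => ((f₀ x : ℝ≥0) : ℝ) * f x) μ :=
      hf.bdd_mul hcoec.aestronglyMeasurable
        (ae_of_all _ fun x => by simpa [Real.norm_eq_abs] using hcoeb x)
    rw [lintegral_add_measure, hdp, hdm,
      lintegral_withDensity_eq_lintegral_mul μ (Measurable.ennreal_ofReal (f := fun x => -f x) hfm.neg) hcoe,
      lintegral_withDensity_eq_lintegral_mul μ hfm.ennreal_ofReal hcoe]
    have e1 : ∫⁻ x, ((fun x => ENNReal.ofReal (-f x)) * fun x => ((f₀ x : ℝ≥0) : ℝ≥0∞)) x ∂μ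
        = ∫⁻ x, ENNReal.ofReal (((f₀ x : ℝ≥0) : ℝ) * max (-f x) 0) ∂μ := by
      refine lintegral_congr (fun x => ?_)
      simp only [Pi.mul_apply]
      rw [ENNReal.ofReal_mul (NNReal.coe_nonneg _), ofReal_max_zero,
        ENNReal.ofReal_coe_nnreal, mul_comm]
    have e2 : ∫⁻ x, ((fun x => ENNReal.ofReal (f x)) * fun x => ((f₀ x : ℝ≥0) : ℝ≥0∞)) x ∂μ
        = ∫⁻ x, ENNReal.ofReal (((f₀ x : ℝ≥0) : ℝ) * max (f x) 0) ∂μ := by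
      refine lintegral_congr (fun x => ?_)
      simp only [Pi.mul_apply]
      rw [ENNReal.ofReal_mul (NNReal.coe_nonneg _), ofReal_max_zero,
        ENNReal.ofReal_coe_nnreal, mul_comm]
    have e3 : ∫⁻ x, ((f₀ x : ℝ≥0) : ℝ≥0∞) ∂ν
        = ∫⁻ x, ENNReal.ofReal ((f₀ x : ℝ≥0) : ℝ) ∂ν :=
      lintegral_congr (fun x => by rw [ENNReal.ofReal_coe_nnreal])
    rw [e1, e2, e3,
      ← ofReal_integral_eq_lintegral_ofReal i1 (ae_of_all _ fun x => NNReal.coe_nonneg _),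
      ← ofReal_integral_eq_lintegral_ofReal iminus (ae_of_all _ fun x =>
        mul_nonneg (NNReal.coe_nonneg _) (le_max_right _ _)),
      ← ofReal_integral_eq_lintegral_ofReal iplus (ae_of_all _ fun x =>
        mul_nonneg (NNReal.coe_nonneg _) (le_max_right _ _)),
      ← ENNReal.ofReal_add (integral_nonneg fun x => NNReal.coe_nonneg _)
        (integral_nonneg fun x => mul_nonneg (NNReal.coe_nonneg _) (le_max_right _ _))]
    congr 1
    rw [hbc _ _ hcoec hcoeb, ← integral_add if2 iminus]
    refine integral_congr_ae (ae_of_all _ fun x => ?_)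
    show ((f₀ x : ℝ≥0) : ℝ) * f x + ((f₀ x : ℝ≥0) : ℝ) * max (-f x) 0
        = ((f₀ x : ℝ≥0) : ℝ) * max (f x) 0
    have h7 : ((f₀ x : ℝ≥0) : ℝ) * f x + ((f₀ x : ℝ≥0) : ℝ) * max (-f x) 0
        = ((f₀ x : ℝ≥0) : ℝ) * (f x + max (-f x) 0) := by ring
    rw [h7, max_add_max_neg]
  have hac : ν ≪ μ := by
    have hle : ν ≤ dplus := by
      rw [← hmeq]; exact Measure.le_add_right le_rfl
    exact (Measure.absolutelyContinuous_of_le hle).trans (withDensity_absolutelyContinuous μ _)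
  refine ⟨hac, ?_⟩
  have h1 := (Measure.rnDeriv_add ν dminus μ).symm
  have h2 := Measure.rnDeriv_withDensity μ (Measurable.ennreal_ofReal (f := fun x => -f x) hfm.neg)
  have h3 := Measure.rnDeriv_withDensity μ hfm.ennreal_ofReal
  have h4 : (ν + dminus).rnDeriv μ = dplus.rnDeriv μ := by rw [hmeq]
  rw [h4] at h1
  have h5 := Measure.rnDeriv_lt_top ν μ
  filter_upwards [h1, h2, h3, h5] with x e1 e2 e3 e5
  rw [Pi.add_apply] at e1
  rw [e2] at e1
  rw [e3] at e1
  rcases le_or_gt 0 (f x) with h | h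
  · rw [ENNReal.ofReal_of_nonpos (by linarith), add_zero] at e1
    rw [e1, ENNReal.toReal_ofReal h]
  · exfalso
    rw [ENNReal.ofReal_of_nonpos (le_of_lt h)] at e1
    have hpos : 0 < ENNReal.ofReal (-f x) := ENNReal.ofReal_pos.mpr (by linarith)
    have : (0:ℝ≥0∞) < ν.rnDeriv μ x + ENNReal.ofReal (-f x) :=
      lt_of_lt_of_le hpos le_add_self
    rw [e1] at this
    exact lt_irrefl _ this


end Stmt3Aux

open Stmt3Aux in
/-- `dν/dμ ∈ L²(μ)` iff the first row of `C_{J→D}` is square-summable, in which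
case `dν/dμ = Σ_k c_{0k} P_k` with the series converging in `L²(μ)`. -/
theorem stmt3 (α β γ δ : ℕ → ℝ) (hβ : ∀ k, 0 < β k) (hδ : ∀ k, 0 < δ k)
    (c : ℕ → ℕ → ℝ)
    (hc : ∀ j, orthPoly α β j =
      ∑ i ∈ Finset.range (j+1), Polynomial.C (c i j) * orthPoly γ δ i)
    (hc0 : ∀ i j, j < i → c i j = 0)
    (μ ν : Measure ℝ) [IsProbabilityMeasure μ] [IsProbabilityMeasure ν]
    (hμcomp : ∃ s : Set ℝ, IsCompact s ∧ μ sᶜ = 0)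
    (hνcomp : ∃ s : Set ℝ, IsCompact s ∧ ν sᶜ = 0)
    (hμorth : ∀ j k, ∫ s, (orthPoly α β j).eval s * (orthPoly α β k).eval s ∂μ
      = if j = k then 1 else 0)
    (hνorth : ∀ j k, ∫ s, (orthPoly γ δ j).eval s * (orthPoly γ δ k).eval s ∂ν
      = if j = k then 1 else 0) :
    ((ν ≪ μ ∧ MemLp (fun s => (ν.rnDeriv μ s).toReal) 2 μ)
        ↔ Summable (fun k => (c 0 k)^2)) ∧
    ((ν ≪ μ ∧ MemLp (fun s => (ν.rnDeriv μ s).toReal) 2 μ) →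
      Tendsto (fun n => eLpNorm
          (fun s => (∑ k ∈ Finset.range n, c 0 k * (orthPoly α β k).eval s)
            - (ν.rnDeriv μ s).toReal) 2 μ)
        atTop (𝓝 0)) := by
  obtain ⟨sμ, hsμc, hsμ0⟩ := hμcomp
  obtain ⟨sν, hsνc, hsν0⟩ := hνcomp
  set P : ℕ → Polynomial ℝ := orthPoly α β with hP
  set Q : ℕ → Polynomial ℝ := orthPoly γ δ with hQ
  -- MemLp of the P k
  have hPsq : ∀ k, Integrable (fun s => (P k).eval s ^ 2) μ := by
    intro k
    by_contra h
    have h2 : ¬ Integrable (fun s => (P k).eval s * (P k).eval s) μ := by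
      simpa [sq] using h
    have h3 := hμorth k k
    rw [integral_undef h2] at h3
    simp at h3
  have hPmem : ∀ k, MemLp (fun s => (P k).eval s) 2 μ := fun k =>
    (memLp_two_iff_integrable_sq ((P k).continuous.aestronglyMeasurable)).mpr (hPsq k)
  set e : ℕ → Lp ℝ 2 μ := fun k => (hPmem k).toLp _ with he
  have honb : Orthonormal ℝ e := by
    rw [orthonormal_iff_ite]
    intro j k
    rw [L2.inner_def, ← hμorth j k]
    refine integral_congr_ae ?_
    filter_upwards [(hPmem j).coeFn_toLp, (hPmem k).coeFn_toLp] with x hj hk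
    simp [he, hj, hk, RCLike.inner_apply, starRingEnd_apply]; ring
  -- ∫ P k dν = c 0 k
  have hQint : ∀ i, Integrable (fun s => (Q i).eval s) ν := fun i =>
    integrable_of_compactSupport hsνc hsν0 (Q i).continuous
  have hQ0 : ∀ i, ∫ s, (Q i).eval s ∂ν = if i = 0 then 1 else 0 := by
    intro i
    have h := hνorth i 0
    have hone : Q 0 = 1 := rfl
    simpa [hone] using h
  have hPν : ∀ k, ∫ s, (P k).eval s ∂ν = c 0 k := by
    intro k
    rw [hc k]
    have h1 : ∀ s : ℝ, (∑ i ∈ Finset.range (k+1),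
        Polynomial.C (c i k) * Q i).eval s = ∑ i ∈ Finset.range (k+1), c i k * (Q i).eval s := by
      intro s; simp [Polynomial.eval_finset_sum]
    rw [integral_congr_ae (ae_of_all _ h1),
      integral_finset_sum _ (fun i _ => (hQint i).const_mul _)]
    have h2 : ∀ i ∈ Finset.range (k+1), ∫ s, c i k * (Q i).eval s ∂ν
        = if i = 0 then c i k else 0 := by
      intro i _
      rw [integral_const_mul, hQ0 i]
      by_cases h : i = 0 <;> simp [h]
    rw [Finset.sum_congr rfl h2]
    simp
  -- integrability helpers over μ
  have haeμ : ∀ᵐ x ∂μ, x ∈ sμ := ae_mem_of_null_compl hsμ0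
  have hbddμ : ∀ p : Polynomial ℝ, ∃ C, ∀ᵐ x ∂μ, ‖p.eval x‖ ≤ C := by
    intro p
    obtain ⟨C, hC⟩ := hsμc.exists_bound_of_continuousOn p.continuous.continuousOn
    exact ⟨C, by filter_upwards [haeμ] with x hx using hC x hx⟩
  -- forward direction
  have fwd : (ν ≪ μ ∧ MemLp (fun s => (ν.rnDeriv μ s).toReal) 2 μ) →
      Summable (fun k => (c 0 k)^2) := by
    rintro ⟨hac, hmem⟩
    set F : Lp ℝ 2 μ := hmem.toLp _ with hF
    have hink : ∀ k, inner ℝ (e k) F = c 0 k := by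
      intro k
      rw [L2.inner_def]
      have h1 : ∫ x, inner ℝ (e k x) (F x) ∂μ
          = ∫ x, (ν.rnDeriv μ x).toReal • (P k).eval x ∂μ := by
        refine integral_congr_ae ?_
        filter_upwards [(hPmem k).coeFn_toLp, hmem.coeFn_toLp] with x h2 h3
        simp [he, hF, h2, h3, RCLike.inner_apply, starRingEnd_apply, smul_eq_mul, mul_comm]
      rw [h1, integral_rnDeriv_smul hac, hPν k]
    have hsum := Orthonormal.inner_products_summable (𝕜 := ℝ) F honb
    refine hsum.congr (fun k => ?_)
    rw [hink k, Real.norm_eq_abs, sq_abs]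
  -- backward direction: construct the L² limit and identify the measure
  have back : Summable (fun k => (c 0 k)^2) →
      ∃ F : Lp ℝ 2 μ, HasSum (fun k => c 0 k • e k) F ∧ ν ≪ μ ∧
        (fun x => (ν.rnDeriv μ x).toReal) =ᵐ[μ] ⇑F := by
    intro hsum
    obtain ⟨F, hF⟩ := (summable_smul_of_sq_summable honb hsum)
    refine ⟨F, hF, ?_⟩
    set f : ℝ → ℝ := ⇑F with hfdef
    have hfm : Measurable f := (Lp.stronglyMeasurable F).measurable
    have hf1 : Integrable f μ := (Lp.memLp F).integrable (by norm_num)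
    have hPf : ∀ k, ∫ x, (P k).eval x * f x ∂μ = c 0 k := by
      intro k
      have h := inner_hasSum honb hF k
      rw [L2.inner_def] at h
      rw [← h]
      refine integral_congr_ae ?_
      filter_upwards [(hPmem k).coeFn_toLp] with x h2
      simp [he, h2, hfdef, RCLike.inner_apply, starRingEnd_apply]; ring
    have hintν : ∀ p : Polynomial ℝ, Integrable (fun x => p.eval x) ν := fun p =>
      integrable_of_compactSupport hsνc hsν0 p.continuous
    have hintμ : ∀ p : Polynomial ℝ, Integrable (fun x => p.eval x * f x) μ := by
      intro p
      obtain ⟨C, hC⟩ := hbddμ p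
      exact hf1.bdd_mul p.continuous.aestronglyMeasurable hC
    have hpoly : ∀ p : Polynomial ℝ, ∫ x, p.eval x ∂ν = ∫ x, p.eval x * f x ∂μ := by
      intro p
      have hmem := poly_mem_span α β hβ p
      induction hmem using Submodule.span_induction with
      | mem q hq =>
        obtain ⟨k, rfl⟩ := hq
        rw [hPν k, hPf k]
      | zero => simp
      | add q r hq hr ihq ihr =>
        have h1 : ∀ x : ℝ, (q + r).eval x = q.eval x + r.eval x := fun x => by simp
        rw [integral_congr_ae (ae_of_all _ h1), integral_add (hintν q) (hintν r), ihq, ihr,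
          ← integral_add (hintμ q) (hintμ r)]
        refine integral_congr_ae (ae_of_all _ fun x => ?_)
        simp; ring
      | smul a q hq ihq =>
        have h1 : ∀ x : ℝ, (a • q).eval x = a * q.eval x := fun x => by simp
        rw [integral_congr_ae (ae_of_all _ h1), integral_const_mul, ihq, ← integral_const_mul]
        refine integral_congr_ae (ae_of_all _ fun x => ?_)
        simp; ring
    exact rnDeriv_eq_of_poly hsμc hsμ0 hsνc hsν0 hfm hf1 hpoly
  constructor
  · constructor
    · exact fwd
    · intro hsum
      obtain ⟨F, hF, hac, hrn⟩ := back hsum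
      exact ⟨hac, (Lp.memLp F).ae_eq hrn.symm⟩
  · intro h
    obtain ⟨F, hF, hac, hrn⟩ := back (fwd h)
    have hTn : ∀ n, ⇑(∑ k ∈ Finset.range n, c 0 k • e k)
        =ᵐ[μ] fun x => ∑ k ∈ Finset.range n, c 0 k * (P k).eval x := by
      intro n
      induction n with
      | zero =>
        simp only [Finset.range_zero, Finset.sum_empty]
        exact Lp.coeFn_zero ℝ 2 μ
      | succ n ih =>
        have h1 := Lp.coeFn_add (∑ k ∈ Finset.range n, c 0 k • e k) (c 0 n • e n)
        have h2 := Lp.coeFn_smul (c 0 n) (e n)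
        rw [Finset.sum_range_succ]
        filter_upwards [h1, ih, h2, (hPmem n).coeFn_toLp] with x e1 e2 e3 e4
        rw [e1, Pi.add_apply, e2, e3, Pi.smul_apply, Finset.sum_range_succ]
        simp [he, e4]
    have heq : ∀ n, eLpNorm
        (fun s => (∑ k ∈ Finset.range n, c 0 k * (orthPoly α β k).eval s)
          - (ν.rnDeriv μ s).toReal) 2 μ
        = ENNReal.ofReal ‖(∑ k ∈ Finset.range n, c 0 k • e k) - F‖ := by
      intro n
      have h1 : (fun s => (∑ k ∈ Finset.range n, c 0 k * (orthPoly α β k).eval s)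
          - (ν.rnDeriv μ s).toReal)
          =ᵐ[μ] ⇑((∑ k ∈ Finset.range n, c 0 k • e k) - F) := by
        filter_upwards [hTn n, hrn,
          Lp.coeFn_sub (∑ k ∈ Finset.range n, c 0 k • e k) F] with x e1 e2 e3
        rw [e3, Pi.sub_apply, e1, e2]
      rw [eLpNorm_congr_ae h1, Lp.norm_def,
        ENNReal.ofReal_toReal (Lp.eLpNorm_ne_top _)]
    have htend : Tendsto (fun n => ‖(∑ k ∈ Finset.range n, c 0 k • e k) - F‖)
        atTop (𝓝 0) := by
      have h1 := hF.tendsto_sum_nat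
      rw [tendsto_iff_norm_sub_tendsto_zero] at h1
      exact h1
    have h2 : (fun n => eLpNorm
        (fun s => (∑ k ∈ Finset.range n, c 0 k * (orthPoly α β k).eval s)
          - (ν.rnDeriv μ s).toReal) 2 μ)
        = fun n => ENNReal.ofReal ‖(∑ k ∈ Finset.range n, c 0 k • e k) - F‖ :=
      funext heq
    rw [h2]
    have h3 := ENNReal.tendsto_ofReal htend
    simpa using h3

end
end

section
/- Let J and D be Jacobi operators with sup_k |α_k| and sup_k |β_k| finite for each, with spectral measures μ and ν respectively, and let c_{ij} be the entries of C = C_{J→D}. Then the following are equivalent: (i) ν is absolutely continuous with respect to μ and dν/dμ ∈ L^∞(μ); (ii) there exists a continuous linear operator T on the real Hilbert space ℓ²(ℕ) with ⟨e_i, T e_j⟩ = c_{ij} for all i, j. In that case ‖T‖² equals the μ-essential supremum of |dν/dμ|. -/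
open Polynomial MeasureTheory Filter Topology
open scoped ENNReal NNReal

noncomputable section

/-! ### Auxiliary lemmas -/

set_option linter.unusedVariables false
set_option linter.unnecessarySimpa false
set_option linter.unusedSectionVars false
set_option linter.deprecated false

namespace Stmt4Aux

theorem orthPoly_natDegree_le (a b : ℕ → ℝ) : ∀ k, (orthPoly a b k).natDegree ≤ k := by
  intro k
  induction k using Nat.strong_induction_on with
  | _ k ih =>
    match k with
    | 0 => simp [orthPoly]
    | 1 =>
      refine le_trans (natDegree_C_mul_le _ _) ?_
      simpa using natDegree_X_sub_C_le (a 0)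
    | (k+2) =>
      refine le_trans (natDegree_C_mul_le _ _) ?_
      refine le_trans (natDegree_sub_le _ _) ?_
      rw [max_le_iff]
      constructor
      · refine le_trans (natDegree_mul_le) ?_
        have h1 : (X - C (a (k+1))).natDegree ≤ 1 := natDegree_X_sub_C_le _
        have h2 := ih (k+1) (by omega)
        omega
      · refine le_trans (natDegree_C_mul_le _ _) ?_
        exact le_trans (ih k (by omega)) (by omega)

theorem orthPoly_coeff (a b : ℕ → ℝ) (hb : ∀ k, 0 < b k) :
    ∀ k, (orthPoly a b k).coeff k = (∏ i ∈ Finset.range k, b i)⁻¹ := by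
  intro k
  induction k using Nat.strong_induction_on with
  | _ k ih =>
    match k with
    | 0 => simp [orthPoly]
    | 1 => simp [orthPoly, coeff_C_mul, coeff_X_one]
    | (k+2) =>
      have h1 := ih (k+1) (by omega)
      have hd1 := orthPoly_natDegree_le a b (k+1)
      have hd0 := orthPoly_natDegree_le a b k
      rw [orthPoly, coeff_C_mul, sub_mul]
      rw [coeff_sub, coeff_sub, coeff_X_mul]
      have e1 : (C (a (k+1)) * orthPoly a b (k+1)).coeff (k+2) = 0 := by
        apply coeff_eq_zero_of_natDegree_lt
        exact lt_of_le_of_lt (natDegree_C_mul_le _ _) (by omega)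
      have e2 : (C (b k) * orthPoly a b k).coeff (k+2) = 0 := by
        apply coeff_eq_zero_of_natDegree_lt
        exact lt_of_le_of_lt (natDegree_C_mul_le _ _) (by omega)
      rw [e1, e2, h1, sub_zero, sub_zero]
      simp only [Finset.prod_range_succ, mul_inv]
      ring

theorem orthPoly_span (a b : ℕ → ℝ) (hb : ∀ k, 0 < b k) :
    ∀ n (p : Polynomial ℝ), p.natDegree ≤ n →
      ∃ x : ℕ → ℝ, p = ∑ j ∈ Finset.range (n+1), Polynomial.C (x j) * orthPoly a b j := by
  intro n
  induction n with
  | zero =>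
    intro p hp
    refine ⟨fun _ => p.coeff 0, ?_⟩
    rw [Polynomial.eq_C_of_natDegree_le_zero hp]
    simp [orthPoly]
  | succ n ihn =>
    intro p hp
    have hprod : (∏ i ∈ Finset.range (n+1), b i) ≠ 0 :=
      Finset.prod_ne_zero_iff.2 fun i _ => (hb i).ne'
    set t : ℝ := p.coeff (n+1) * (∏ i ∈ Finset.range (n+1), b i) with ht
    set q : Polynomial ℝ := p - Polynomial.C t * orthPoly a b (n+1) with hq
    have hqdeg : q.natDegree ≤ n := by
      rw [Polynomial.natDegree_le_iff_coeff_eq_zero]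
      intro N hN
      rcases Nat.lt_or_ge N (n+2) with h | h
      · have hN1 : N = n+1 := by omega
        subst hN1
        rw [hq, Polynomial.coeff_sub, Polynomial.coeff_C_mul,
          orthPoly_coeff a b hb, ht]
        field_simp
        ring
      · rw [hq, Polynomial.coeff_sub]
        have h1 : p.coeff N = 0 :=
          Polynomial.coeff_eq_zero_of_natDegree_lt (by omega)
        have h2 : (Polynomial.C t * orthPoly a b (n+1)).coeff N = 0 := by
          apply Polynomial.coeff_eq_zero_of_natDegree_lt
          exact lt_of_le_of_lt (Polynomial.natDegree_C_mul_le _ _)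
            (lt_of_le_of_lt (orthPoly_natDegree_le a b (n+1)) (by omega))
        rw [h1, h2, sub_zero]
    obtain ⟨x, hx⟩ := ihn q hqdeg
    refine ⟨Function.update x (n+1) t, ?_⟩
    rw [Finset.sum_range_succ]
    have hupd : ∀ j ∈ Finset.range (n+1),
        Polynomial.C (Function.update x (n+1) t j) * orthPoly a b j
        = Polynomial.C (x j) * orthPoly a b j := by
      intro j hj
      rw [Function.update_of_ne (by simp at hj; omega)]
    rw [Finset.sum_congr rfl hupd, ← hx, Function.update_self, hq]
    ring

/-! #### Integrability helpers -/

theorem integrable_of_compactsupp {μ : Measure ℝ} [IsFiniteMeasure μ] {s : Set ℝ}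
    (hs : IsCompact s) (hμs : μ sᶜ = 0) {g : ℝ → ℝ} (hg : Continuous g) :
    Integrable g μ := by
  obtain ⟨M, hM⟩ := hs.exists_bound_of_continuousOn hg.continuousOn
  refine ⟨hg.aestronglyMeasurable, HasFiniteIntegral.of_bounded (C := M) ?_⟩
  have h : ∀ᵐ x ∂μ, x ∈ s := by rw [ae_iff]; exact hμs
  filter_upwards [h] with x hx using hM x hx

theorem memℒp_two_cts {μ : Measure ℝ} [IsFiniteMeasure μ] {s : Set ℝ} (hs : IsCompact s)
    (hμs : μ sᶜ = 0) {g : ℝ → ℝ} (hg : Continuous g) : MemLp g 2 μ := by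
  obtain ⟨M, hM⟩ := hs.exists_bound_of_continuousOn hg.continuousOn
  refine MemLp.of_bound hg.aestronglyMeasurable M ?_
  have h : ∀ᵐ x ∂μ, x ∈ s := by rw [ae_iff]; exact hμs
  filter_upwards [h] with x hx using hM x hx

theorem integrable_of_bdd {μ : Measure ℝ} [IsFiniteMeasure μ] {f : ℝ → ℝ}
    (hf : Continuous f) (h : ∀ x, |f x| ≤ 1) : Integrable f μ :=
  ⟨hf.aestronglyMeasurable, HasFiniteIntegral.of_bounded (C := 1) (ae_of_all _ h)⟩

/-! #### From the quadratic-form inequality on polynomials to a measure inequality -/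

theorem cts_le_of_poly_le {μ ν : Measure ℝ} [IsProbabilityMeasure μ] [IsProbabilityMeasure ν]
    {s : Set ℝ} (hs : IsCompact s) (hμs : μ sᶜ = 0) (hνs : ν sᶜ = 0)
    {K : ℝ} (hK : 0 ≤ K)
    (hΦ : ∀ p : Polynomial ℝ, ∫ x, (p.eval x)^2 ∂ν ≤ K * ∫ x, (p.eval x)^2 ∂μ)
    {f : ℝ → ℝ} (hf : Continuous f) (hf0 : ∀ x, 0 ≤ f x) (hf1 : ∀ x, f x ≤ 1) :
    ∫ x, f x ∂ν ≤ K * ∫ x, f x ∂μ := by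
  obtain ⟨r, hr⟩ := hs.isBounded.subset_closedBall 0
  have hsub : s ⊆ Set.Icc (-r) r := by rwa [Real.closedBall_eq_Icc, zero_sub, zero_add] at hr
  have haeν : ∀ᵐ x ∂ν, x ∈ s := by rw [ae_iff]; exact hνs
  have haeμ : ∀ᵐ x ∂μ, x ∈ s := by rw [ae_iff]; exact hμs
  set g : ℝ → ℝ := fun x => Real.sqrt (f x) with hgdef
  have hg : Continuous g := Real.continuous_sqrt.comp hf
  have hg0 : ∀ x, 0 ≤ g x := fun x => Real.sqrt_nonneg _
  have hg1 : ∀ x, g x ≤ 1 := fun x => by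
    rw [hgdef]; simpa using Real.sqrt_le_sqrt (hf1 x)
  have hgsq : ∀ x, (g x)^2 = f x := fun x => Real.sq_sqrt (hf0 x)
  refine le_of_forall_pos_le_add ?_
  intro ε' hε'
  set ε : ℝ := min 1 (ε' / (5 * (K + 1))) with hεdef
  have hεpos : 0 < ε := lt_min one_pos (by positivity)
  have hε1 : ε ≤ 1 := min_le_left _ _
  obtain ⟨p, hp⟩ := exists_polynomial_near_of_continuousOn (-r) r g hg.continuousOn ε hεpos
  have key : ∀ x ∈ s, f x ≤ (p.eval x)^2 + 5*ε ∧ (p.eval x)^2 ≤ f x + 5*ε := by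
    intro x hx
    have hpx := le_of_lt (hp x (hsub hx))
    have h1 : |p.eval x| ≤ g x + ε := by
      have := abs_sub_abs_le_abs_sub (p.eval x) (g x)
      rw [abs_of_nonneg (hg0 x)] at this
      nlinarith [abs_nonneg (p.eval x)]
    have h2 : g x ≤ |p.eval x| + ε := by
      have := abs_sub_abs_le_abs_sub (g x) (p.eval x)
      rw [abs_of_nonneg (hg0 x), abs_sub_comm] at this
      linarith
    constructor
    · have : (g x)^2 ≤ (|p.eval x| + ε)^2 := by
        apply sq_le_sq' <;> nlinarith [hg0 x, abs_nonneg (p.eval x)]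
      have habs : |p.eval x| ≤ 1 + ε := le_trans h1 (by linarith [hg1 x])
      have hsq : (p.eval x)^2 = |p.eval x|^2 := (sq_abs _).symm
      nlinarith [hgsq x, abs_nonneg (p.eval x)]
    · have : (p.eval x)^2 = |p.eval x|^2 := (sq_abs _).symm
      nlinarith [hg1 x, hg0 x, abs_nonneg (p.eval x), hgsq x]
  have hintf_ν : Integrable f ν := integrable_of_compactsupp hs hνs hf
  have hintf_μ : Integrable f μ := integrable_of_compactsupp hs hμs hf
  have hintp_ν : Integrable (fun x => (p.eval x)^2) ν :=
    integrable_of_compactsupp hs hνs (p.continuous.pow 2)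
  have hintp_μ : Integrable (fun x => (p.eval x)^2) μ :=
    integrable_of_compactsupp hs hμs (p.continuous.pow 2)
  have step1 : ∫ x, f x ∂ν ≤ ∫ x, (p.eval x)^2 ∂ν + 5*ε := by
    have : ∫ x, f x ∂ν ≤ ∫ x, ((p.eval x)^2 + 5*ε) ∂ν := by
      apply integral_mono_ae hintf_ν (hintp_ν.add (integrable_const _))
      filter_upwards [haeν] with x hx using (key x hx).1
    rwa [integral_add hintp_ν (integrable_const _), integral_const, probReal_univ,
      one_smul] at this
  have step2 : ∫ x, (p.eval x)^2 ∂μ ≤ ∫ x, f x ∂μ + 5*ε := by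
    have : ∫ x, (p.eval x)^2 ∂μ ≤ ∫ x, (f x + 5*ε) ∂μ := by
      apply integral_mono_ae hintp_μ (hintf_μ.add (integrable_const _))
      filter_upwards [haeμ] with x hx using (key x hx).2
    rwa [integral_add hintf_μ (integrable_const _), integral_const, probReal_univ,
      one_smul] at this
  have hchain : ∫ x, f x ∂ν ≤ K * ∫ x, f x ∂μ + (K+1) * (5*ε) := by
    have := hΦ p
    nlinarith [hεpos]
  refine le_trans hchain ?_
  have : (K+1) * (5*ε) ≤ ε' := by
    have h5 : ε ≤ ε' / (5 * (K + 1)) := min_le_right _ _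
    rw [div_eq_inv_mul] at h5
    have hKpos : (0:ℝ) < 5 * (K+1) := by positivity
    calc (K+1) * (5*ε) = (5*(K+1)) * ε := by ring
    _ ≤ (5*(K+1)) * ((5*(K+1))⁻¹ * ε') := by
        apply mul_le_mul_of_nonneg_left _ (le_of_lt hKpos)
        exact h5
    _ = ε' := by field_simp
  linarith

theorem measure_le_of_cts_le {μ ν : Measure ℝ} [IsProbabilityMeasure μ] [IsProbabilityMeasure ν]
    {K : ℝ} (hK : 0 ≤ K)
    (h : ∀ f : ℝ → ℝ, Continuous f → (∀ x, 0 ≤ f x) → (∀ x, f x ≤ 1) →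
      ∫ x, f x ∂ν ≤ K * ∫ x, f x ∂μ) :
    ν ≤ ENNReal.ofReal K • μ := by
  have hopen : ∀ U : Set ℝ, IsOpen U → ν U ≤ ENNReal.ofReal K * μ U := by
    intro U hU
    refine le_of_forall_lt fun t ht => ?_
    obtain ⟨C, hCU, hC, htC⟩ := hU.exists_lt_isCompact ht
    obtain ⟨fc, hf0, hf1, hf01⟩ := exists_continuous_zero_one_of_isClosed
      hU.isClosed_compl hC.isClosed
      (disjoint_compl_left_iff.2 hCU)
    set f : ℝ → ℝ := fun x => fc x with hfdef
    have hfc : Continuous f := fc.continuous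
    have hfnn : ∀ x, 0 ≤ f x := fun x => (hf01 x).1
    have hfle : ∀ x, f x ≤ 1 := fun x => (hf01 x).2
    have hint_ν : Integrable f ν := integrable_of_bdd hfc
      (fun x => abs_le.2 ⟨by linarith [hfnn x], hfle x⟩)
    have hint_μ : Integrable f μ := integrable_of_bdd hfc
      (fun x => abs_le.2 ⟨by linarith [hfnn x], hfle x⟩)
    have h1 : (ν C).toReal ≤ ∫ x, f x ∂ν := by
      have e1 : (ν C).toReal = ∫ x in C, (1:ℝ) ∂ν := by
        rw [setIntegral_const]; simp [measureReal_def]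
      rw [e1]
      have e2 : ∫ x in C, (1:ℝ) ∂ν ≤ ∫ x in C, f x ∂ν := by
        apply setIntegral_mono_on (integrableOn_const (measure_ne_top _ _))
          hint_ν.integrableOn hC.measurableSet
        intro x hx
        have := hf1 hx
        simp only [Pi.one_apply] at this
        simp [hfdef, this]
      refine le_trans e2 (setIntegral_le_integral hint_ν (ae_of_all _ hfnn))
    have h2 : ∫ x, f x ∂μ ≤ (μ U).toReal := by
      rw [← integral_add_compl hU.measurableSet hint_μ]
      have e0 : ∫ x in Uᶜ, f x ∂μ = 0 := by
        have : Set.EqOn f 0 Uᶜ := fun x hx => by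
          have := hf0 hx; simpa [hfdef] using this
        rw [setIntegral_congr_fun hU.measurableSet.compl this]
        simp
      have e1 : ∫ x in U, f x ∂μ ≤ ∫ x in U, (1:ℝ) ∂μ := by
        apply setIntegral_mono_on hint_μ.integrableOn
          (integrableOn_const (measure_ne_top _ _)) hU.measurableSet
        intro x _; exact hfle x
      have e2 : ∫ x in U, (1:ℝ) ∂μ = (μ U).toReal := by rw [setIntegral_const]; simp [measureReal_def]
      rw [e0, add_zero]
      linarith
    have hchain : (ν C).toReal ≤ K * (μ U).toReal := by
      have := h f hfc hfnn hfle
      nlinarith [integral_nonneg (μ := μ) (f := f) hfnn]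
    calc t < ν C := htC
    _ = ENNReal.ofReal (ν C).toReal := (ENNReal.ofReal_toReal (measure_ne_top _ _)).symm
    _ ≤ ENNReal.ofReal (K * (μ U).toReal) := ENNReal.ofReal_le_ofReal hchain
    _ = ENNReal.ofReal K * ENNReal.ofReal (μ U).toReal := ENNReal.ofReal_mul hK
    _ = ENNReal.ofReal K * μ U := by rw [ENNReal.ofReal_toReal (measure_ne_top _ _)]
  refine Measure.le_iff.2 fun A hA => ?_
  refine ENNReal.le_of_forall_pos_le_add fun ε hε _ => ?_
  set ε' : ℝ≥0∞ := (ε : ℝ≥0∞) / (ENNReal.ofReal K + 1) with hε'def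
  have hKne : ENNReal.ofReal K + 1 ≠ 0 := by simp
  have hKnetop : ENNReal.ofReal K + 1 ≠ ⊤ := by simp [ENNReal.ofReal_ne_top]
  have hε'pos : ε' ≠ 0 := by
    simp only [hε'def, ne_eq, ENNReal.div_eq_zero_iff, not_or]
    exact ⟨by exact_mod_cast hε.ne', hKnetop⟩
  obtain ⟨U, hAU, hUopen, hU⟩ := Set.exists_isOpen_lt_of_lt A (μ A + ε')
    (ENNReal.lt_add_right (measure_ne_top _ _) hε'pos)
  calc ν A ≤ ν U := measure_mono hAU
  _ ≤ ENNReal.ofReal K * μ U := hopen U hUopen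
  _ ≤ ENNReal.ofReal K * (μ A + ε') := mul_le_mul_right hU.le _
  _ = ENNReal.ofReal K * μ A + ENNReal.ofReal K * ε' := by rw [mul_add]
  _ ≤ ENNReal.ofReal K * μ A + (ENNReal.ofReal K + 1) * ε' := by
      gcongr; exact le_add_of_nonneg_right (by simp)
  _ ≤ ENNReal.ofReal K * μ A + ε := by
      gcongr
      rw [hε'def, ENNReal.mul_div_cancel hKne hKnetop]
  _ = (ENNReal.ofReal K • μ) A + ε := by simp

/-! #### Radon–Nikodym facts -/

theorem rnDeriv_le_of_le_smul {μ ν : Measure ℝ} [IsFiniteMeasure μ] [IsFiniteMeasure ν]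
    {c : ℝ≥0∞} (h : ν ≤ c • μ) : ν.rnDeriv μ ≤ᵐ[μ] fun _ => c := by
  apply ae_le_of_forall_setLIntegral_le_of_sigmaFinite (Measure.measurable_rnDeriv ν μ)
  intro s hs _
  calc ∫⁻ x in s, ν.rnDeriv μ x ∂μ ≤ ν s := Measure.setLIntegral_rnDeriv_le s
  _ ≤ (c • μ) s := h s
  _ = c * μ s := by simp
  _ = ∫⁻ _ in s, c ∂μ := by rw [setLIntegral_const]

theorem le_smul_of_rnDeriv_le {μ ν : Measure ℝ} [SigmaFinite μ] [IsFiniteMeasure ν] {c : ℝ≥0∞}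
    (hac : ν ≪ μ) (h : ν.rnDeriv μ ≤ᵐ[μ] fun _ => c) : ν ≤ c • μ := by
  have h1 := Measure.withDensity_rnDeriv_eq ν μ hac
  have h2 : μ.withDensity (ν.rnDeriv μ) ≤ μ.withDensity (fun _ => c) := withDensity_mono h
  rw [withDensity_const] at h2
  rwa [h1] at h2

theorem memℒp_top_iff_bound {μ ν : Measure ℝ} [IsFiniteMeasure μ] [IsFiniteMeasure ν] :
    MemLp (fun s => (ν.rnDeriv μ s).toReal) ⊤ μ ↔
      ∃ C : ℝ, 0 ≤ C ∧ ∀ᵐ x ∂μ, (ν.rnDeriv μ x).toReal ≤ C := by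
  constructor
  · intro hm
    have hlt : eLpNorm (fun s => (ν.rnDeriv μ s).toReal) ⊤ μ < ⊤ := hm.2
    rw [eLpNorm_exponent_top, eLpNormEssSup] at hlt
    refine ⟨(essSup (fun x => (‖(ν.rnDeriv μ x).toReal‖₊ : ℝ≥0∞)) μ).toReal,
      ENNReal.toReal_nonneg, ?_⟩
    filter_upwards [ENNReal.ae_le_essSup
      (fun x => (‖(ν.rnDeriv μ x).toReal‖₊ : ℝ≥0∞)) (μ := μ)] with x hx
    have := ENNReal.toReal_mono hlt.ne hx
    rw [ENNReal.coe_toReal] at this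
    calc (ν.rnDeriv μ x).toReal ≤ ‖(ν.rnDeriv μ x).toReal‖ := le_abs_self _
    _ ≤ _ := by rw [← coe_nnnorm]; exact_mod_cast this
  · rintro ⟨C, hC0, hC⟩
    refine MemLp.of_bound
      ((Measure.measurable_rnDeriv ν μ).ennreal_toReal.aestronglyMeasurable) C ?_
    filter_upwards [hC] with x hx
    rw [Real.norm_eq_abs, abs_of_nonneg ENNReal.toReal_nonneg]
    exact hx

theorem poly_le_of_measure_le {μ ν : Measure ℝ} [IsFiniteMeasure μ] {s : Set ℝ}
    (hs : IsCompact s) (hμs : μ sᶜ = 0) {K : ℝ} (hK : 0 ≤ K)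
    (h : ν ≤ ENNReal.ofReal K • μ) (g : ℝ → ℝ) (hg : Continuous g) :
    ∫ x, (g x)^2 ∂ν ≤ K * ∫ x, (g x)^2 ∂μ := by
  have hint : Integrable (fun x => (g x)^2) μ := by
    obtain ⟨M, hM⟩ := hs.exists_bound_of_continuousOn (hg.pow 2).continuousOn
    refine ⟨(hg.pow 2).aestronglyMeasurable, HasFiniteIntegral.of_bounded (C := M) ?_⟩
    have hae : ∀ᵐ x ∂μ, x ∈ s := by rw [ae_iff]; exact hμs
    filter_upwards [hae] with x hx using hM x hx
  have hint' : Integrable (fun x => (g x)^2) (ENNReal.ofReal K • μ) :=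
    hint.smul_measure ENNReal.ofReal_ne_top
  have step1 : ∫ x, (g x)^2 ∂ν ≤ ∫ x, (g x)^2 ∂(ENNReal.ofReal K • μ) :=
    integral_mono_measure h (ae_of_all _ fun x => sq_nonneg _) hint'
  have step2 : ∫ x, (g x)^2 ∂(ENNReal.ofReal K • μ) = K * ∫ x, (g x)^2 ∂μ := by
    rw [integral_smul_measure, ENNReal.toReal_ofReal hK, smul_eq_mul]
  linarith

/-! #### Finite sums against orthonormal polynomial families -/

theorem integral_sum_sq {μ : Measure ℝ} [IsProbabilityMeasure μ] {s : Set ℝ}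
    (hs : IsCompact s) (hμs : μ sᶜ = 0) (P : ℕ → Polynomial ℝ)
    (horth : ∀ j k, ∫ x, (P j).eval x * (P k).eval x ∂μ = if j = k then 1 else 0)
    (x : ℕ → ℝ) (n : ℕ) :
    ∫ t, (∑ j ∈ Finset.range n, x j * (P j).eval t)^2 ∂μ
      = ∑ j ∈ Finset.range n, (x j)^2 := by
  have expand : ∀ t : ℝ, (∑ j ∈ Finset.range n, x j * (P j).eval t)^2
      = ∑ j ∈ Finset.range n, ∑ k ∈ Finset.range n,
          (x j * x k) * ((P j).eval t * (P k).eval t) := by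
    intro t
    rw [sq, Finset.sum_mul_sum]
    exact Finset.sum_congr rfl fun j _ => Finset.sum_congr rfl fun k _ => by ring
  simp_rw [expand]
  rw [integral_finset_sum _ (fun j _ => integrable_finset_sum _ (fun k _ => by
    exact (integrable_of_compactsupp hs hμs
      (((P j).continuous.mul (P k).continuous))).const_mul _))]
  have : ∀ j ∈ Finset.range n,
      ∫ t, ∑ k ∈ Finset.range n, (x j * x k) * ((P j).eval t * (P k).eval t) ∂μ
        = (x j)^2 := by
    intro j hj
    rw [integral_finset_sum _ (fun k _ => by
      exact (integrable_of_compactsupp hs hμs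
        (((P j).continuous.mul (P k).continuous))).const_mul _)]
    have : ∀ k ∈ Finset.range n,
        ∫ t, (x j * x k) * ((P j).eval t * (P k).eval t) ∂μ
          = (x j * x k) * if j = k then 1 else 0 := by
      intro k _
      rw [MeasureTheory.integral_const_mul, horth]
    rw [Finset.sum_congr rfl this]
    simp only [mul_ite, mul_one, mul_zero, Finset.sum_ite_eq, hj, if_pos (Finset.mem_range.1 hj)]
    have hjj : j ∈ Finset.range n := hj
    simp only [Finset.sum_ite_eq, hjj, if_true]
    ring
  rw [Finset.sum_congr rfl this]

theorem poly_repr (Q : ℕ → Polynomial ℝ) (P : ℕ → Polynomial ℝ) (c : ℕ → ℕ → ℝ)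
    (hc : ∀ j, P j = ∑ i ∈ Finset.range (j+1), Polynomial.C (c i j) * Q i)
    (hc0 : ∀ i j, j < i → c i j = 0) (x : ℕ → ℝ) (n : ℕ) :
    ∑ j ∈ Finset.range n, Polynomial.C (x j) * P j
      = ∑ i ∈ Finset.range n,
          Polynomial.C (∑ j ∈ Finset.range n, c i j * x j) * Q i := by
  have step1 : ∀ j ∈ Finset.range n, Polynomial.C (x j) * P j
      = ∑ i ∈ Finset.range n, Polynomial.C (c i j * x j) * Q i := by
    intro j hj
    rw [hc j, Finset.mul_sum]
    rw [← Finset.sum_subset (Finset.range_subset_range.2 (Finset.mem_range.1 hj))]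
    · exact Finset.sum_congr rfl fun i _ => by
        rw [Polynomial.C_mul]; ring
    · intro i _ hi
      rw [hc0 i j (by simp at hi; omega)]
      simp
  rw [Finset.sum_congr rfl step1, Finset.sum_comm]
  exact Finset.sum_congr rfl fun i _ => by
    rw [← Finset.sum_mul, ← map_sum]

/-! #### `ℓ²` computations -/

theorem single_inner (i : ℕ) (f : lp (fun _ : ℕ => ℝ) 2) :
    (inner ℝ (lp.single 2 i (1:ℝ)) f : ℝ) = f i := by
  rw [lp.inner_single_left]
  simp [RCLike.inner_apply]

theorem orthonormal_single :
    Orthonormal ℝ (fun i : ℕ => lp.single 2 i (1:ℝ) : ℕ → lp (fun _ : ℕ => ℝ) 2) := by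
  rw [orthonormal_iff_ite]
  intro i j
  rw [single_inner]
  rw [lp.single_apply]
  split_ifs with h <;> simp [h]

theorem Ty_apply (T : lp (fun _ : ℕ => ℝ) 2 →L[ℝ] lp (fun _ : ℕ => ℝ) 2) (c : ℕ → ℕ → ℝ)
    (hT : ∀ i j, (inner ℝ (lp.single 2 i (1:ℝ)) (T (lp.single 2 j (1:ℝ))) : ℝ) = c i j)
    (x : ℕ → ℝ) (n : ℕ) (i : ℕ) :
    (T (∑ j ∈ Finset.range n, x j • lp.single 2 j (1:ℝ)) : ∀ _, ℝ) i
      = ∑ j ∈ Finset.range n, c i j * x j := by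
  rw [← single_inner i]
  rw [map_sum]
  rw [inner_sum]
  refine Finset.sum_congr rfl fun j _ => ?_
  rw [_root_.map_smul, inner_smul_right, hT]
  ring

theorem norm_y_sq (x : ℕ → ℝ) (n : ℕ) :
    ‖∑ j ∈ Finset.range n, x j • lp.single 2 j (1:ℝ)‖^2
      = ∑ j ∈ Finset.range n, (x j)^2 := by
  rw [← real_inner_self_eq_norm_sq]
  rw [orthonormal_single.inner_sum x x]
  refine Finset.sum_congr rfl fun j _ => ?_
  simp [sq]

theorem norm_Ty_sq (T : lp (fun _ : ℕ => ℝ) 2 →L[ℝ] lp (fun _ : ℕ => ℝ) 2) (c : ℕ → ℕ → ℝ)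
    (hT : ∀ i j, (inner ℝ (lp.single 2 i (1:ℝ)) (T (lp.single 2 j (1:ℝ))) : ℝ) = c i j)
    (hc0 : ∀ i j, j < i → c i j = 0) (x : ℕ → ℝ) (n : ℕ) :
    ‖T (∑ j ∈ Finset.range n, x j • lp.single 2 j (1:ℝ))‖^2
      = ∑ i ∈ Finset.range n, (∑ j ∈ Finset.range n, c i j * x j)^2 := by
  set y := ∑ j ∈ Finset.range n, x j • lp.single 2 j (1:ℝ) with hy
  have happ : ∀ i, (T y : ∀ _, ℝ) i = ∑ j ∈ Finset.range n, c i j * x j :=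
    Ty_apply T c hT x n
  rw [← real_inner_self_eq_norm_sq]
  rw [lp.inner_eq_tsum]
  have hz : ∀ i ∉ Finset.range n, (inner ℝ ((T y : ∀ _, ℝ) i) ((T y : ∀ _, ℝ) i) : ℝ) = 0 := by
    intro i hi
    have : (T y : ∀ _, ℝ) i = 0 := by
      rw [happ i]
      apply Finset.sum_eq_zero
      intro j hj
      rw [hc0 i j (by simp at hi hj; omega)]
      ring
    simp [this]
  rw [tsum_eq_sum hz]
  refine Finset.sum_congr rfl fun i _ => ?_
  rw [happ i]
  simp [RCLike.inner_apply, sq]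

theorem opNorm_le_of_bound_on_fin (T : lp (fun _ : ℕ => ℝ) 2 →L[ℝ] lp (fun _ : ℕ => ℝ) 2)
    {R : ℝ} (hR : 0 ≤ R)
    (h : ∀ (x : ℕ → ℝ) (n : ℕ),
      ‖T (∑ j ∈ Finset.range n, x j • lp.single 2 j (1:ℝ))‖^2
        ≤ R * ‖∑ j ∈ Finset.range n, x j • lp.single 2 j (1:ℝ)‖^2) :
    ‖T‖ ≤ Real.sqrt R := by
  apply T.opNorm_le_bound (Real.sqrt_nonneg R)
  intro z
  set y : ℕ → lp (fun _ : ℕ => ℝ) 2 :=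
    fun n => ∑ j ∈ Finset.range n, (z j : ℝ) • lp.single 2 j (1:ℝ) with hydef
  have hsingle : ∀ i : ℕ, (lp.single 2 i (z i) : lp (fun _ : ℕ => ℝ) 2)
      = (z i : ℝ) • (lp.single 2 i (1:ℝ) : lp (fun _ : ℕ => ℝ) 2) := by
    intro i
    have := lp.single_smul (E := fun _ : ℕ => ℝ) 2 i (z i) (1:ℝ)
    simpa using this
  have htend : Tendsto y atTop (𝓝 z) := by
    have hsum := lp.hasSum_single (E := fun _ : ℕ => ℝ) (p := 2) (by norm_num) z
    have hsum' : HasSum (fun i : ℕ => (z i : ℝ) • lp.single 2 i (1:ℝ)) z := by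
      simpa [hsingle] using hsum
    exact hsum'.tendsto_sum_nat
  have hn : ∀ n, ‖T (y n)‖ ≤ Real.sqrt R * ‖y n‖ := by
    intro n
    have h1 := h (fun j => z j) n
    have h2 : (Real.sqrt R * ‖y n‖)^2 = R * ‖y n‖^2 := by
      rw [mul_pow, Real.sq_sqrt hR]
    nlinarith [norm_nonneg (T (y n)), mul_nonneg (Real.sqrt_nonneg R) (norm_nonneg (y n)),
      sq_nonneg (‖T (y n)‖ - Real.sqrt R * ‖y n‖), sq_nonneg (‖T (y n)‖ + Real.sqrt R * ‖y n‖)]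
  have hT1 : Tendsto (fun n => ‖T (y n)‖) atTop (𝓝 ‖T z‖) :=
    ((T.continuous.tendsto z).comp htend).norm
  have hT2 : Tendsto (fun n => Real.sqrt R * ‖y n‖) atTop (𝓝 (Real.sqrt R * ‖z‖)) :=
    htend.norm.const_mul _
  exact le_of_tendsto_of_tendsto' hT1 hT2 hn

/-! #### The inclusion `L²(μ) → L²(ν)` and the construction of the connection operator -/

def inclLp {μ ν : Measure ℝ} [IsFiniteMeasure μ] (c : ℝ≥0∞) (hc : c ≠ ⊤) (hc0 : c ≠ 0)
    (h : ν ≤ c • μ) : Lp ℝ 2 μ →L[ℝ] Lp ℝ 2 ν := by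
  have hac : ν ≪ μ := Measure.absolutelyContinuous_of_le_smul h
  refine LinearMap.mkContinuous
    { toFun := fun f => (MemLp.of_measure_le_smul hc h (Lp.memLp f)).toLp ⇑f
      map_add' := ?_
      map_smul' := ?_ } ((c ^ ((1:ℝ)/2)).toReal) ?_
  · intro f g
    have hfg : ⇑(f + g) =ᵐ[ν] ⇑f + ⇑g := hac.ae_eq (Lp.coeFn_add f g)
    rw [MemLp.toLp_congr _ ((MemLp.of_measure_le_smul hc h (Lp.memLp f)).add
        (MemLp.of_measure_le_smul hc h (Lp.memLp g))) hfg]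
    exact MemLp.toLp_add _ _
  · intro r f
    have hfg : ⇑(r • f) =ᵐ[ν] r • ⇑f := hac.ae_eq (Lp.coeFn_smul r f)
    simp only [RingHom.id_apply]
    rw [MemLp.toLp_congr _ ((MemLp.of_measure_le_smul hc h (Lp.memLp f)).const_smul r) hfg]
    exact MemLp.toLp_const_smul r _
  · intro f
    simp only [LinearMap.coe_mk, AddHom.coe_mk]
    rw [Lp.norm_toLp]
    have h1 : eLpNorm ⇑f 2 ν ≤ eLpNorm ⇑f 2 (c • μ) := eLpNorm_mono_measure _ h
    have h2 : eLpNorm ⇑f 2 (c • μ) = c ^ ((1:ℝ)/2) • eLpNorm ⇑f 2 μ := by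
      rw [eLpNorm_smul_measure_of_ne_zero hc0]
      norm_num
    have h3 : (c ^ ((1:ℝ)/2) • eLpNorm ⇑f 2 μ).toReal
        = (c ^ ((1:ℝ)/2)).toReal * ‖f‖ := by
      rw [smul_eq_mul, ENNReal.toReal_mul, Lp.norm_def]
    rw [← h3]
    apply ENNReal.toReal_mono
    · rw [smul_eq_mul]
      exact ENNReal.mul_ne_top (ENNReal.rpow_ne_top_of_nonneg (by norm_num) hc)
        (Lp.eLpNorm_ne_top f)
    · exact le_trans h1 h2.le

theorem inclLp_def {μ ν : Measure ℝ} [IsFiniteMeasure μ] (c : ℝ≥0∞) (hc : c ≠ ⊤) (hc0 : c ≠ 0)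
    (h : ν ≤ c • μ) (f : Lp ℝ 2 μ) : inclLp c hc hc0 h f
      = (MemLp.of_measure_le_smul hc h (Lp.memLp f)).toLp ⇑f := rfl

section main
variable {μ ν : Measure ℝ} [IsProbabilityMeasure μ] [IsProbabilityMeasure ν]

theorem inclLp_toLp (c : ℝ≥0∞) (hc : c ≠ ⊤) (hc0 : c ≠ 0) (h : ν ≤ c • μ)
    {g : ℝ → ℝ} (hg : MemLp g 2 μ) (hg' : MemLp g 2 ν) :
    inclLp c hc hc0 h (hg.toLp g) = hg'.toLp g := by
  have hac : ν ≪ μ := Measure.absolutelyContinuous_of_le_smul h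
  rw [inclLp_def]
  exact MemLp.toLp_congr _ hg' (hac.ae_eq (MemLp.coeFn_toLp hg))

theorem integral_QP {s : Set ℝ} (hs : IsCompact s) (hνs : ν sᶜ = 0)
    (Q P : ℕ → Polynomial ℝ) (c : ℕ → ℕ → ℝ)
    (hc : ∀ j, P j = ∑ k ∈ Finset.range (j+1), Polynomial.C (c k j) * Q k)
    (hc0 : ∀ i j, j < i → c i j = 0)
    (hνorth : ∀ j k, ∫ x, (Q j).eval x * (Q k).eval x ∂ν = if j = k then 1 else 0)
    (i j : ℕ) : ∫ x, (Q i).eval x * (P j).eval x ∂ν = c i j := by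
  have hev : ∀ x : ℝ, (Q i).eval x * (P j).eval x
      = ∑ k ∈ Finset.range (j+1), c k j * ((Q i).eval x * (Q k).eval x) := by
    intro x
    rw [hc j]
    rw [eval_finset_sum, Finset.mul_sum]
    exact Finset.sum_congr rfl fun k _ => by simp [eval_mul]; ring
  simp_rw [hev]
  rw [integral_finset_sum _ (fun k _ => by exact ((integrable_of_compactsupp hs hνs
    ((Q i).continuous.mul (Q k).continuous))).const_mul _)]
  have : ∀ k ∈ Finset.range (j+1),
      ∫ x, c k j * ((Q i).eval x * (Q k).eval x) ∂ν = c k j * if i = k then 1 else 0 := by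
    intro k _
    rw [MeasureTheory.integral_const_mul, hνorth]
  rw [Finset.sum_congr rfl this]
  simp only [mul_ite, mul_one, mul_zero]
  rw [Finset.sum_ite_eq (Finset.range (j+1)) i (fun k => c k j)]
  by_cases hij : i ∈ Finset.range (j+1)
  · simp [hij]
  · rw [if_neg hij]
    rw [hc0 i j (by simp at hij; omega)]

theorem exists_T {s : Set ℝ} (hs : IsCompact s) (hμs : μ sᶜ = 0) (hνs : ν sᶜ = 0)
    (P Q : ℕ → Polynomial ℝ) (c : ℕ → ℕ → ℝ)
    (hc : ∀ j, P j = ∑ k ∈ Finset.range (j+1), Polynomial.C (c k j) * Q k)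
    (hc0 : ∀ i j, j < i → c i j = 0)
    (hμorth : ∀ j k, ∫ x, (P j).eval x * (P k).eval x ∂μ = if j = k then 1 else 0)
    (hνorth : ∀ j k, ∫ x, (Q j).eval x * (Q k).eval x ∂ν = if j = k then 1 else 0)
    (K : ℝ≥0∞) (hK : K ≠ ⊤) (hK0 : K ≠ 0) (hle : ν ≤ K • μ) :
    ∃ T : lp (fun _ : ℕ => ℝ) 2 →L[ℝ] lp (fun _ : ℕ => ℝ) 2,
      ∀ i j, (inner ℝ (lp.single 2 i (1:ℝ)) (T (lp.single 2 j (1:ℝ))) : ℝ) = c i j := by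
  classical
  set PL : ℕ → Lp ℝ 2 μ := fun j => (memℒp_two_cts hs hμs (P j).continuous).toLp _ with hPL
  set QL : ℕ → Lp ℝ 2 ν := fun j => (memℒp_two_cts hs hνs (Q j).continuous).toLp _ with hQL
  have innerP : ∀ j k, (inner ℝ (PL j) (PL k) : ℝ) = ∫ x, (P j).eval x * (P k).eval x ∂μ := by
    intro j k
    rw [MeasureTheory.L2.inner_def]
    apply integral_congr_ae
    filter_upwards [MemLp.coeFn_toLp (memℒp_two_cts hs hμs (P j).continuous),
      MemLp.coeFn_toLp (memℒp_two_cts hs hμs (P k).continuous)] with x h1 h2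
    simp only [hPL]
    rw [h1, h2]
    simp [RCLike.inner_apply, mul_comm]
  have innerQ : ∀ j k, (inner ℝ (QL j) (QL k) : ℝ) = ∫ x, (Q j).eval x * (Q k).eval x ∂ν := by
    intro j k
    rw [MeasureTheory.L2.inner_def]
    apply integral_congr_ae
    filter_upwards [MemLp.coeFn_toLp (memℒp_two_cts hs hνs (Q j).continuous),
      MemLp.coeFn_toLp (memℒp_two_cts hs hνs (Q k).continuous)] with x h1 h2
    simp only [hQL]
    rw [h1, h2]
    simp [RCLike.inner_apply, mul_comm]
  have hPorth : Orthonormal ℝ PL := by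
    rw [orthonormal_iff_ite]
    intro j k; rw [innerP, hμorth]
  have hQorth : Orthonormal ℝ QL := by
    rw [orthonormal_iff_ite]
    intro j k; rw [innerQ, hνorth]
  set Vμ : lp (fun _ : ℕ => ℝ) 2 →ₗᵢ[ℝ] Lp ℝ 2 μ :=
    hPorth.orthogonalFamily.linearIsometry with hVμ
  set Vν : lp (fun _ : ℕ => ℝ) 2 →ₗᵢ[ℝ] Lp ℝ 2 ν :=
    hQorth.orthogonalFamily.linearIsometry with hVν
  have hVμs : ∀ j, Vμ (lp.single 2 j (1:ℝ)) = PL j := by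
    intro j
    rw [hVμ, OrthogonalFamily.linearIsometry_apply_single]
    simp [LinearIsometry.toSpanSingleton_apply]
  have hVνs : ∀ j, Vν (lp.single 2 j (1:ℝ)) = QL j := by
    intro j
    rw [hVν, OrthogonalFamily.linearIsometry_apply_single]
    simp [LinearIsometry.toSpanSingleton_apply]
  set ι : Lp ℝ 2 μ →L[ℝ] Lp ℝ 2 ν := inclLp K hK hK0 hle with hι
  refine ⟨(ContinuousLinearMap.adjoint Vν.toContinuousLinearMap).comp
    (ι.comp Vμ.toContinuousLinearMap), ?_⟩
  intro i j
  rw [ContinuousLinearMap.comp_apply, ContinuousLinearMap.comp_apply]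
  rw [ContinuousLinearMap.adjoint_inner_right]
  rw [LinearIsometry.coe_toContinuousLinearMap, LinearIsometry.coe_toContinuousLinearMap]
  rw [hVνs i, hVμs j]
  rw [hι, inclLp_toLp K hK hK0 hle _ (memℒp_two_cts hs hνs (P j).continuous)]
  have : (inner ℝ (QL i) ((memℒp_two_cts hs hνs (P j).continuous).toLp _) : ℝ)
      = ∫ x, (Q i).eval x * (P j).eval x ∂ν := by
    rw [MeasureTheory.L2.inner_def]
    apply integral_congr_ae
    filter_upwards [MemLp.coeFn_toLp (memℒp_two_cts hs hνs (Q i).continuous),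
      MemLp.coeFn_toLp (memℒp_two_cts hs hνs (P j).continuous)] with x h1 h2
    simp only [hQL]
    rw [h1, h2]
    simp [RCLike.inner_apply, mul_comm]
  rw [this]
  exact integral_QP hs hνs Q P c hc hc0 hνorth i j

/-! #### The core identity relating quadratic forms and the operator norm -/

variable {s : Set ℝ} (hs : IsCompact s) (hμs : μ sᶜ = 0) (hνs : ν sᶜ = 0)
  (P Q : ℕ → Polynomial ℝ) (c : ℕ → ℕ → ℝ)
  (hc : ∀ j, P j = ∑ i ∈ Finset.range (j+1), Polynomial.C (c i j) * Q i)
  (hc0 : ∀ i j, j < i → c i j = 0)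
  (hμorth : ∀ j k, ∫ x, (P j).eval x * (P k).eval x ∂μ = if j = k then 1 else 0)
  (hνorth : ∀ j k, ∫ x, (Q j).eval x * (Q k).eval x ∂ν = if j = k then 1 else 0)
  (T : lp (fun _ : ℕ => ℝ) 2 →L[ℝ] lp (fun _ : ℕ => ℝ) 2)
  (hT : ∀ i j, (inner ℝ (lp.single 2 i (1:ℝ)) (T (lp.single 2 j (1:ℝ))) : ℝ) = c i j)

include hs hμs hνs hc hc0 hμorth hνorth hT in
theorem core_eq (x : ℕ → ℝ) (n : ℕ) :
    ‖∑ j ∈ Finset.range n, x j • lp.single 2 j (1:ℝ)‖^2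
        = ∫ t, ((∑ j ∈ Finset.range n, Polynomial.C (x j) * P j).eval t)^2 ∂μ
    ∧ ‖T (∑ j ∈ Finset.range n, x j • lp.single 2 j (1:ℝ))‖^2
        = ∫ t, ((∑ j ∈ Finset.range n, Polynomial.C (x j) * P j).eval t)^2 ∂ν := by
  have heval : ∀ t : ℝ, (∑ j ∈ Finset.range n, Polynomial.C (x j) * P j).eval t
      = ∑ j ∈ Finset.range n, x j * (P j).eval t := by
    intro t; rw [eval_finset_sum]; exact Finset.sum_congr rfl fun j _ => by simp
  constructor
  · rw [norm_y_sq]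
    simp_rw [heval]
    rw [integral_sum_sq hs hμs P hμorth x n]
  · rw [norm_Ty_sq T c hT hc0 x n]
    have hrepr := poly_repr Q P c hc hc0 x n
    set d : ℕ → ℝ := fun i => ∑ j ∈ Finset.range n, c i j * x j with hd
    have heval2 : ∀ t : ℝ, (∑ j ∈ Finset.range n, Polynomial.C (x j) * P j).eval t
        = ∑ i ∈ Finset.range n, d i * (Q i).eval t := by
      intro t; rw [hrepr, eval_finset_sum]
      exact Finset.sum_congr rfl fun j _ => by rw [eval_mul, eval_C]
    simp_rw [heval2]
    rw [integral_sum_sq hs hνs Q hνorth d n]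

include hs hμs hνs hc hc0 hμorth hνorth hT in
theorem phi_of_T
    (hspan : ∀ p : Polynomial ℝ, ∃ n : ℕ, ∃ x : ℕ → ℝ,
      p = ∑ j ∈ Finset.range n, Polynomial.C (x j) * P j) :
    ∀ p : Polynomial ℝ, ∫ t, (p.eval t)^2 ∂ν ≤ ‖T‖^2 * ∫ t, (p.eval t)^2 ∂μ := by
  intro p
  obtain ⟨n, x, hx⟩ := hspan p
  obtain ⟨h1, h2⟩ := core_eq hs hμs hνs P Q c hc hc0 hμorth hνorth T hT x n
  rw [hx, ← h1, ← h2]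
  have := T.le_opNorm (∑ j ∈ Finset.range n, x j • lp.single 2 j (1:ℝ))
  nlinarith [norm_nonneg (T (∑ j ∈ Finset.range n, x j • lp.single 2 j (1:ℝ))),
    norm_nonneg (∑ j ∈ Finset.range n, x j • lp.single 2 j (1:ℝ)), T.opNorm_nonneg]

include hs hμs hνs hc hc0 hμorth hνorth hT in
theorem opnorm_sq_le {R : ℝ} (hR : 0 ≤ R)
    (hΦ : ∀ p : Polynomial ℝ, ∫ t, (p.eval t)^2 ∂ν ≤ R * ∫ t, (p.eval t)^2 ∂μ) :
    ‖T‖^2 ≤ R := by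
  have hb := opNorm_le_of_bound_on_fin T hR (fun x n => by
    obtain ⟨h1, h2⟩ := core_eq hs hμs hνs P Q c hc hc0 hμorth hνorth T hT x n
    rw [h1, h2]
    exact hΦ _)
  calc ‖T‖^2 ≤ (Real.sqrt R)^2 := by
        apply pow_le_pow_left₀ T.opNorm_nonneg hb
  _ = R := Real.sq_sqrt hR

end main

/-! #### Essential suprema over `ℝ` -/

theorem essSup_le_of_ae_le_real {μ : Measure ℝ} [IsProbabilityMeasure μ] {f : ℝ → ℝ} {C : ℝ}
    (h0 : ∀ x, 0 ≤ f x) (h : f ≤ᵐ[μ] fun _ => C) : essSup f μ ≤ C := by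
  have hne : (ae μ).NeBot := (MeasureTheory.ae_neBot).2 (IsProbabilityMeasure.ne_zero μ)
  have hcb : IsCoboundedUnder (· ≤ ·) (ae μ) f :=
    isCoboundedUnder_le_of_eventually_le (ae μ) (x := 0) (ae_of_all _ h0)
  exact limsup_le_of_le hcb h

theorem essSup_nonneg_real {μ : Measure ℝ} [IsProbabilityMeasure μ] {f : ℝ → ℝ} {C : ℝ}
    (h0 : ∀ x, 0 ≤ f x) (h : f ≤ᵐ[μ] fun _ => C) : 0 ≤ essSup f μ := by
  have hne : (ae μ).NeBot := (MeasureTheory.ae_neBot).2 (IsProbabilityMeasure.ne_zero μ)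
  have hbd : IsBoundedUnder (· ≤ ·) (ae μ) f := isBoundedUnder_of_eventually_le h
  exact le_limsup_of_frequently_le ((ae_of_all _ h0).frequently) hbd

theorem ae_le_essSup_real {μ : Measure ℝ} [IsProbabilityMeasure μ] {f : ℝ → ℝ} {C : ℝ}
    (h : f ≤ᵐ[μ] fun _ => C) : f ≤ᵐ[μ] fun _ => essSup f μ := by
  have hbd : IsBoundedUnder (· ≤ ·) (ae μ) f := isBoundedUnder_of_eventually_le h
  exact ae_le_essSup hbd

theorem rnDeriv_ae_ofReal {μ ν : Measure ℝ} [IsFiniteMeasure ν] {C : ℝ}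
    (h : (fun x => (ν.rnDeriv μ x).toReal) ≤ᵐ[μ] fun _ => C) :
    ν.rnDeriv μ ≤ᵐ[μ] fun _ => ENNReal.ofReal C := by
  filter_upwards [h, Measure.rnDeriv_lt_top ν μ] with x hx hlt
  calc ν.rnDeriv μ x = ENNReal.ofReal ((ν.rnDeriv μ x).toReal) :=
        (ENNReal.ofReal_toReal hlt.ne).symm
  _ ≤ ENNReal.ofReal C := ENNReal.ofReal_le_ofReal hx

theorem toReal_rnDeriv_ae_le {μ ν : Measure ℝ} {C : ℝ}
    (h : ν.rnDeriv μ ≤ᵐ[μ] fun _ => ENNReal.ofReal C) :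
    (fun x => (ν.rnDeriv μ x).toReal) ≤ᵐ[μ] fun _ => max C 0 := by
  filter_upwards [h] with x hx
  calc (ν.rnDeriv μ x).toReal ≤ (ENNReal.ofReal C).toReal :=
        ENNReal.toReal_mono ENNReal.ofReal_ne_top hx
  _ = max C 0 := ENNReal.toReal_ofReal'

end Stmt4Aux

open Stmt4Aux

/-- For bounded Jacobi operators `J`, `D`, `dν/dμ ∈ L^∞(μ)` iff the connection
coefficient matrix `C_{J→D}` is realized by a bounded operator on `ℓ²(ℕ)`, in which case the
squared norm of that operator is the essential supremum of `|dν/dμ|`. -/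
theorem stmt4 (α β γ δ : ℕ → ℝ) (hβ : ∀ k, 0 < β k) (hδ : ∀ k, 0 < δ k)
    (hαbd : ∃ M, ∀ k, |α k| ≤ M) (hβbd : ∃ M, ∀ k, |β k| ≤ M)
    (hγbd : ∃ M, ∀ k, |γ k| ≤ M) (hδbd : ∃ M, ∀ k, |δ k| ≤ M)
    (c : ℕ → ℕ → ℝ)
    (hc : ∀ j, orthPoly α β j =
      ∑ i ∈ Finset.range (j+1), Polynomial.C (c i j) * orthPoly γ δ i)
    (hc0 : ∀ i j, j < i → c i j = 0)
    (μ ν : Measure ℝ) [IsProbabilityMeasure μ] [IsProbabilityMeasure ν]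
    (hμcomp : ∃ s : Set ℝ, IsCompact s ∧ μ sᶜ = 0)
    (hνcomp : ∃ s : Set ℝ, IsCompact s ∧ ν sᶜ = 0)
    (hμorth : ∀ j k, ∫ s, (orthPoly α β j).eval s * (orthPoly α β k).eval s ∂μ
      = if j = k then 1 else 0)
    (hνorth : ∀ j k, ∫ s, (orthPoly γ δ j).eval s * (orthPoly γ δ k).eval s ∂ν
      = if j = k then 1 else 0) :
    ((ν ≪ μ ∧ MemLp (fun s => (ν.rnDeriv μ s).toReal) ⊤ μ)
        ↔ (∃ T : lp (fun _ : ℕ => ℝ) 2 →L[ℝ] lp (fun _ : ℕ => ℝ) 2,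
            ∀ i j, (inner ℝ (lp.single 2 i (1:ℝ)) (T (lp.single 2 j (1:ℝ))) : ℝ) = c i j)) ∧
    (∀ T : lp (fun _ : ℕ => ℝ) 2 →L[ℝ] lp (fun _ : ℕ => ℝ) 2,
      (∀ i j, (inner ℝ (lp.single 2 i (1:ℝ)) (T (lp.single 2 j (1:ℝ))) : ℝ) = c i j) →
      ‖T‖^2 = essSup (fun s => |(ν.rnDeriv μ s).toReal|) μ) := by
  obtain ⟨s1, hs1, hμs1⟩ := hμcomp
  obtain ⟨s2, hs2, hνs2⟩ := hνcomp
  set S : Set ℝ := s1 ∪ s2 with hSdef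
  have hS : IsCompact S := hs1.union hs2
  have hμS : μ Sᶜ = 0 :=
    measure_mono_null (Set.compl_subset_compl.2 Set.subset_union_left) hμs1
  have hνS : ν Sᶜ = 0 :=
    measure_mono_null (Set.compl_subset_compl.2 Set.subset_union_right) hνs2
  set P : ℕ → Polynomial ℝ := orthPoly α β with hPdef
  set Q : ℕ → Polynomial ℝ := orthPoly γ δ with hQdef
  have hspan : ∀ p : Polynomial ℝ, ∃ n : ℕ, ∃ x : ℕ → ℝ,
      p = ∑ j ∈ Finset.range n, Polynomial.C (x j) * P j := by
    intro p
    obtain ⟨x, hx⟩ := orthPoly_span α β hβ p.natDegree p le_rfl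
    exact ⟨p.natDegree + 1, x, hx⟩
  set f : ℝ → ℝ := fun s => (ν.rnDeriv μ s).toReal with hfdef
  have hf0 : ∀ x, 0 ≤ f x := fun _ => ENNReal.toReal_nonneg
  -- Main implications
  have hT_to_phi : ∀ T : lp (fun _ : ℕ => ℝ) 2 →L[ℝ] lp (fun _ : ℕ => ℝ) 2,
      (∀ i j, (inner ℝ (lp.single 2 i (1:ℝ)) (T (lp.single 2 j (1:ℝ))) : ℝ) = c i j) →
      ∀ p : Polynomial ℝ, ∫ t, (p.eval t)^2 ∂ν ≤ ‖T‖^2 * ∫ t, (p.eval t)^2 ∂μ :=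
    fun T hT => phi_of_T hS hμS hνS P Q c hc hc0 hμorth hνorth T hT hspan
  have hphi_to_le : ∀ {R : ℝ}, 0 ≤ R →
      (∀ p : Polynomial ℝ, ∫ t, (p.eval t)^2 ∂ν ≤ R * ∫ t, (p.eval t)^2 ∂μ) →
      ν ≤ ENNReal.ofReal R • μ := by
    intro R hR hphi
    exact measure_le_of_cts_le hR
      (fun g hg h0 h1 => cts_le_of_poly_le hS hμS hνS hR hphi hg h0 h1)
  constructor
  · constructor
    · rintro ⟨hac, hmem⟩
      obtain ⟨C, hC0, hCae⟩ := memℒp_top_iff_bound.1 hmem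
      have hrn : ν.rnDeriv μ ≤ᵐ[μ] fun _ => ENNReal.ofReal C := rnDeriv_ae_ofReal hCae
      have hle : ν ≤ ENNReal.ofReal C • μ := le_smul_of_rnDeriv_le hac hrn
      have hK0 : ENNReal.ofReal C ≠ 0 := by
        intro h0
        have h1 := hle Set.univ
        rw [h0] at h1
        simp [measure_univ] at h1
      exact exists_T hS hμS hνS P Q c hc hc0 hμorth hνorth
        (ENNReal.ofReal C) ENNReal.ofReal_ne_top hK0 hle
    · rintro ⟨T, hT⟩
      have hphi := hT_to_phi T hT
      have hle := hphi_to_le (by positivity) hphi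
      have hac := Measure.absolutelyContinuous_of_le_smul hle
      refine ⟨hac, memℒp_top_iff_bound.2 ⟨max (‖T‖^2) 0, le_max_right _ _, ?_⟩⟩
      exact toReal_rnDeriv_ae_le (rnDeriv_le_of_le_smul hle)
  · intro T hT
    have hphi := hT_to_phi T hT
    have hle := hphi_to_le (by positivity) hphi
    have hac := Measure.absolutelyContinuous_of_le_smul hle
    have hfae : f ≤ᵐ[μ] fun _ => max (‖T‖^2) 0 :=
      toReal_rnDeriv_ae_le (rnDeriv_le_of_le_smul hle)
    rw [max_eq_left (by positivity)] at hfae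
    have habs : (fun s : ℝ => |(ν.rnDeriv μ s).toReal|) = f :=
      funext fun s => abs_of_nonneg (hf0 s)
    rw [habs]
    have hR_le : essSup f μ ≤ ‖T‖^2 := essSup_le_of_ae_le_real hf0 hfae
    have hR0 : 0 ≤ essSup f μ := essSup_nonneg_real hf0 hfae
    have hfR : f ≤ᵐ[μ] fun _ => essSup f μ := ae_le_essSup_real hfae
    have hrnR : ν.rnDeriv μ ≤ᵐ[μ] fun _ => ENNReal.ofReal (essSup f μ) :=
      rnDeriv_ae_ofReal hfR
    have hleR : ν ≤ ENNReal.ofReal (essSup f μ) • μ := le_smul_of_rnDeriv_le hac hrnR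
    have hphiR : ∀ p : Polynomial ℝ,
        ∫ t, (p.eval t)^2 ∂ν ≤ (essSup f μ) * ∫ t, (p.eval t)^2 ∂μ := fun p =>
      poly_le_of_measure_le hS hμS hR0 hleR _ p.continuous
    have h2 : ‖T‖^2 ≤ essSup f μ :=
      opnorm_sq_le hS hμS hνS P Q c hc hc0 hμorth hνorth T hT hR0 hphiR
    linarith

end
end

section
/- Let J and D be Jacobi operators with sup_k |α_k| and sup_k |β_k| finite for each, with spectral measures μ and ν respectively. Then the following are equivalent: (i) ν ≪ μ with dν/dμ ∈ L^∞(μ) and μ ≪ ν with dμ/dν ∈ L^∞(ν); (ii) there exist continuous linear operators T and S on the real Hilbert space ℓ²(ℕ) with ⟨e_i, T e_j⟩ = (C_{J→D})_{ij} and ⟨e_i, S e_j⟩ = (C_{D→J})_{ij} for all i, j. Moreover, in that case T and S are mutually inverse, so C_{J→D} extends to a bounded invertible operator on ℓ²(ℕ) with bounded inverse. -/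
open Polynomial MeasureTheory Filter Topology Set ENNReal NNReal

local notation "H" => lp (fun _ : ℕ => ℝ) 2

noncomputable section

lemma orthPoly_deg (a b : ℕ → ℝ) (hb : ∀ k, 0 < b k) :
    ∀ k, (orthPoly a b k).natDegree = k ∧
      (orthPoly a b k).leadingCoeff = (∏ i ∈ Finset.range k, b i)⁻¹ := by
  have key : ∀ k, ((orthPoly a b k).natDegree = k ∧
      (orthPoly a b k).leadingCoeff = (∏ i ∈ Finset.range k, b i)⁻¹) ∧
      ((orthPoly a b (k+1)).natDegree = k+1 ∧
      (orthPoly a b (k+1)).leadingCoeff = (∏ i ∈ Finset.range (k+1), b i)⁻¹) := by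
    intro k
    induction k with
    | zero =>
      refine ⟨⟨by simp [orthPoly], by simp [orthPoly]⟩, ?_, ?_⟩
      · show (Polynomial.C (b 0)⁻¹ * (X - Polynomial.C (a 0))).natDegree = 1
        rw [natDegree_C_mul (by have := hb 0; positivity : (b 0)⁻¹ ≠ 0), natDegree_X_sub_C]
      · show (Polynomial.C (b 0)⁻¹ * (X - Polynomial.C (a 0))).leadingCoeff = _
        rw [leadingCoeff_mul, leadingCoeff_C, (monic_X_sub_C (a 0)).leadingCoeff]
        simp
    | succ k ih =>
      obtain ⟨ih0, hd1, hl1⟩ := ih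
      refine ⟨⟨hd1, hl1⟩, ?_⟩
      have hne : orthPoly a b (k+1) ≠ 0 := by
        intro h
        rw [h] at hl1
        simp only [leadingCoeff_zero] at hl1
        have : (∏ i ∈ Finset.range (k+1), b i) > 0 := Finset.prod_pos fun i _ => hb i
        exact absurd hl1.symm (by positivity)
      have hM : ((X - Polynomial.C (a (k+1))) * orthPoly a b (k+1)).natDegree = k + 2 := by
        rw [natDegree_mul (X_sub_C_ne_zero (a (k+1))) hne, natDegree_X_sub_C, hd1]
        ring
      have hMl : ((X - Polynomial.C (a (k+1))) * orthPoly a b (k+1)).leadingCoeff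
          = (∏ i ∈ Finset.range (k+1), b i)⁻¹ := by
        rw [leadingCoeff_monic_mul (monic_X_sub_C _), hl1]
      have hNdeg : (Polynomial.C (b k) * orthPoly a b k).degree
          < ((X - Polynomial.C (a (k+1))) * orthPoly a b (k+1)).degree := by
        rcases eq_or_ne (b k) 0 with hbk | hbk
        · exfalso; exact absurd hbk (hb k).ne'
        rw [degree_C_mul hbk]
        have h1 : (orthPoly a b k).degree ≤ (k : WithBot ℕ) := degree_le_natDegree.trans (by
          exact_mod_cast le_of_eq ih0.1)
        refine lt_of_le_of_lt h1 ?_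
        have : ((X - Polynomial.C (a (k+1))) * orthPoly a b (k+1)).degree = ((k+2 : ℕ) : WithBot ℕ) := by
          rw [degree_eq_natDegree (mul_ne_zero (X_sub_C_ne_zero _) hne), hM]
        rw [this]
        exact_mod_cast Nat.lt_succ_of_lt (Nat.lt_succ_self k)
      constructor
      · show (Polynomial.C (b (k+1))⁻¹ * _).natDegree = k + 2
        rw [natDegree_C_mul (by have := hb (k+1); positivity : (b (k+1))⁻¹ ≠ 0)]
        rw [← hM]
        apply natDegree_sub_eq_left_of_natDegree_lt
        have h2 : (Polynomial.C (b k) * orthPoly a b k).natDegree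
            < ((X - Polynomial.C (a (k+1))) * orthPoly a b (k+1)).natDegree := by
          by_cases hz : Polynomial.C (b k) * orthPoly a b k = 0
          · rw [hz]; simp [hM]
          · exact natDegree_lt_natDegree hz hNdeg
        exact h2
      · show (Polynomial.C (b (k+1))⁻¹ * _).leadingCoeff = _
        rw [leadingCoeff_mul, leadingCoeff_C, leadingCoeff_sub_of_degree_lt hNdeg, hMl]
        rw [Finset.prod_range_succ _ (k+1), mul_inv]
        exact mul_comm _ _
  exact fun k => (key k).1

lemma orthPoly_leadingCoeff_ne (a b : ℕ → ℝ) (hb : ∀ k, 0 < b k) (k : ℕ) :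
    (orthPoly a b k).coeff k ≠ 0 := by
  obtain ⟨hd, hl⟩ := orthPoly_deg a b hb k
  have hcl : (orthPoly a b k).coeff k = (orthPoly a b k).leadingCoeff := by
    rw [leadingCoeff, hd]
  rw [hcl, hl]
  have : (∏ i ∈ Finset.range k, b i) > 0 := Finset.prod_pos fun i _ => hb i
  positivity

/-- every polynomial is a finite combination of the orthPolys -/
lemma orthPoly_span (a b : ℕ → ℝ) (hb : ∀ k, 0 < b k) :
    ∀ N (p : Polynomial ℝ), (∀ m, N ≤ m → p.coeff m = 0) →
      ∃ x : ℕ → ℝ, p = ∑ j ∈ Finset.range N, Polynomial.C (x j) * orthPoly a b j := by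
  intro N
  induction N with
  | zero =>
    intro p hp
    refine ⟨0, ?_⟩
    simp only [Finset.range_zero, Finset.sum_empty]
    ext m
    simpa using hp m (Nat.zero_le m)
  | succ N ih =>
    intro p hp
    set t := p.coeff N / (orthPoly a b N).coeff N with ht
    have hcoef := orthPoly_leadingCoeff_ne a b hb N
    have hdN := (orthPoly_deg a b hb N).1
    have hq : ∀ m, N ≤ m → (p - Polynomial.C t * orthPoly a b N).coeff m = 0 := by
      intro m hm
      rcases eq_or_lt_of_le hm with h | h
      · rw [coeff_sub, coeff_C_mul, ← h, ht, div_mul_cancel₀ _ hcoef, sub_self]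
      · rw [coeff_sub, coeff_C_mul, hp m h,
          coeff_eq_zero_of_natDegree_lt (by omega : (orthPoly a b N).natDegree < m)]
        ring
    obtain ⟨x, hx⟩ := ih (p - Polynomial.C t * orthPoly a b N) hq
    refine ⟨Function.update x N t, ?_⟩
    ·
      rw [Finset.sum_range_succ]
      have h1 : ∀ j ∈ Finset.range N, Polynomial.C (Function.update x N t j) * orthPoly a b j
          = Polynomial.C (x j) * orthPoly a b j := by
        intro j hj
        rw [Function.update_of_ne (Finset.mem_range.1 hj).ne]
      rw [Finset.sum_congr rfl h1, ← hx, Function.update_self]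
      ring




lemma integrable_of_cont (μ : Measure ℝ) [IsFiniteMeasure μ] {f : ℝ → ℝ} (hf : Continuous f)
    {s : Set ℝ} (hs : IsCompact s) (hμs : μ sᶜ = 0) : Integrable f μ := by
  obtain ⟨C, hC⟩ := hs.exists_bound_of_continuousOn hf.continuousOn
  have hae : ∀ᵐ t ∂μ, t ∈ s := by
    rw [ae_iff]
    exact hμs
  refine Integrable.mono' (integrable_const C) hf.aestronglyMeasurable ?_
  filter_upwards [hae] with t ht using hC t ht

lemma integral_sq_sum (μ : Measure ℝ) [IsProbabilityMeasure μ] {s : Set ℝ} (hs : IsCompact s)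
    (hμs : μ sᶜ = 0) (R : ℕ → Polynomial ℝ)
    (horth : ∀ j k, ∫ t, (R j).eval t * (R k).eval t ∂μ = if j = k then 1 else 0)
    (F : Finset ℕ) (x : ℕ → ℝ) :
    ∫ t, (∑ j ∈ F, x j * (R j).eval t) * (∑ j ∈ F, x j * (R j).eval t) ∂μ
      = ∑ j ∈ F, (x j)^2 := by
  have hint : ∀ j k : ℕ, Integrable (fun t => (x j * (R j).eval t) * (x k * (R k).eval t)) μ := by
    intro j k
    have : Continuous (fun t => (x j * (R j).eval t) * (x k * (R k).eval t)) :=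
      (continuous_const.mul (Polynomial.continuous _)).mul
        (continuous_const.mul (Polynomial.continuous _))
    exact integrable_of_cont μ this hs hμs
  have expand : ∀ t : ℝ, (∑ j ∈ F, x j * (R j).eval t) * (∑ j ∈ F, x j * (R j).eval t)
      = ∑ j ∈ F, ∑ k ∈ F, (x j * (R j).eval t) * (x k * (R k).eval t) := by
    intro t
    rw [Finset.sum_mul_sum]
  rw [integral_congr_ae (Eventually.of_forall expand)]
  rw [integral_finset_sum _ (fun j _ => integrable_finset_sum _ (fun k _ => hint j k))]
  have inner_eq : ∀ j ∈ F, ∫ t, ∑ k ∈ F, (x j * (R j).eval t) * (x k * (R k).eval t) ∂μ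
      = ∑ k ∈ F, (x j * x k) * (if j = k then 1 else 0) := by
    intro j _
    rw [integral_finset_sum _ (fun k _ => hint j k)]
    refine Finset.sum_congr rfl fun k _ => ?_
    rw [← horth j k, ← integral_const_mul]
    congr 1
    funext t
    ring
  rw [Finset.sum_congr rfl inner_eq]
  refine Finset.sum_congr rfl fun j hj => ?_
  simp [mul_ite, Finset.sum_ite_eq, hj, sq]

lemma sum_basis_swap (P Q : ℕ → Polynomial ℝ) (c : ℕ → ℕ → ℝ)
    (hc : ∀ j, P j = ∑ i ∈ Finset.range (j+1), Polynomial.C (c i j) * Q i)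
    (hc0 : ∀ i j, j < i → c i j = 0) (F : Finset ℕ) (N : ℕ) (hN : ∀ j ∈ F, j < N) (x : ℕ → ℝ) :
    ∑ j ∈ F, Polynomial.C (x j) * P j
      = ∑ i ∈ Finset.range N, Polynomial.C (∑ j ∈ F, c i j * x j) * Q i := by
  have step1 : ∀ j ∈ F, Polynomial.C (x j) * P j
      = ∑ i ∈ Finset.range N, Polynomial.C (c i j * x j) * Q i := by
    intro j hj
    rw [hc j, Finset.mul_sum]
    rw [Finset.sum_subset (Finset.range_subset_range.2 (hN j hj))]
    · refine Finset.sum_congr rfl fun i _ => ?_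
      rw [Polynomial.C_mul]
      ring
    · intro i _ hi
      rw [hc0 i j (by simpa using hi)]
      simp
  rw [Finset.sum_congr rfl step1, Finset.sum_comm]
  refine Finset.sum_congr rfl fun i _ => ?_
  rw [map_sum, Finset.sum_mul]



lemma integrable_of_cont' (μ : Measure ℝ) [IsFiniteMeasure μ] {f : ℝ → ℝ} (hf : Continuous f)
    {s : Set ℝ} (hs : IsCompact s) (hμs : μ sᶜ = 0) : Integrable f μ := by
  obtain ⟨C, hC⟩ := hs.exists_bound_of_continuousOn hf.continuousOn
  have hae : ∀ᵐ t ∂μ, t ∈ s := by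
    rw [ae_iff]; exact hμs
  refine Integrable.mono' (integrable_const C) hf.aestronglyMeasurable ?_
  filter_upwards [hae] with t ht using hC t ht

/-- Step 1 : integral inequality for continuous nonnegative functions -/
lemma integral_cont_le (μ ν : Measure ℝ) [IsProbabilityMeasure μ] [IsProbabilityMeasure ν]
    {s : Set ℝ} (hs : IsCompact s) (hμs : μ sᶜ = 0) (hνs : ν sᶜ = 0)
    (K : ℝ) (hK : 0 ≤ K)
    (hP : ∀ p : Polynomial ℝ, ∫ t, p.eval t * p.eval t ∂ν ≤ K * ∫ t, p.eval t * p.eval t ∂μ)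
    (g : ℝ → ℝ) (hg : Continuous g) (hg0 : ∀ t, 0 ≤ g t) :
    ∫ t, g t ∂ν ≤ K * ∫ t, g t ∂μ := by
  obtain ⟨r, hr⟩ := hs.isBounded.subset_closedBall 0
  rw [Real.closedBall_eq_Icc] at hr
  set a : ℝ := 0 - r
  set b : ℝ := 0 + r
  have hsub : s ⊆ Set.Icc a b := hr
  have hsqrt : Continuous fun t => Real.sqrt (g t) := Real.continuous_sqrt.comp hg
  obtain ⟨B, hB⟩ := isCompact_Icc.exists_bound_of_continuousOn
    (hsqrt.continuousOn : ContinuousOn (fun t => Real.sqrt (g t)) (Set.Icc a b))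
  set B' : ℝ := max B 0 with hB'
  have hB'0 : 0 ≤ B' := le_max_right _ _
  have hB'b : ∀ x ∈ Set.Icc a b, |Real.sqrt (g x)| ≤ B' := by
    intro x hx
    exact le_trans (hB x hx) (le_max_left _ _)
  have hgint : Integrable g ν := integrable_of_cont' ν hg hs hνs
  have hgintμ : Integrable g μ := integrable_of_cont' μ hg hs hμs
  have haeν : ∀ᵐ t ∂ν, t ∈ s := by rw [ae_iff]; exact hνs
  have haeμ : ∀ᵐ t ∂μ, t ∈ s := by rw [ae_iff]; exact hμs
  refine le_of_forall_pos_le_add fun η hη => ?_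
  set ε : ℝ := min 1 (η / ((2*B'+1) * (K+1))) with hε
  have hεpos : 0 < ε := by
    apply lt_min one_pos
    positivity
  have hε1 : ε ≤ 1 := min_le_left _ _
  have hεη : ε * (2*B'+1) * (K+1) ≤ η := by
    have h1 : ε ≤ η / ((2*B'+1) * (K+1)) := min_le_right _ _
    have h2 : (0:ℝ) < (2*B'+1) * (K+1) := by positivity
    calc ε * (2*B'+1) * (K+1) = ε * ((2*B'+1) * (K+1)) := by ring
    _ ≤ (η / ((2*B'+1) * (K+1))) * ((2*B'+1) * (K+1)) := by
        apply mul_le_mul_of_nonneg_right h1 (le_of_lt h2)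
    _ = η := div_mul_cancel₀ _ (ne_of_gt h2)
  obtain ⟨p, hp⟩ := exists_polynomial_near_of_continuousOn a b (fun t => Real.sqrt (g t))
    hsqrt.continuousOn ε hεpos
  set cst : ℝ := ε * (2*B'+1) with hcst
  have hcst0 : 0 ≤ cst := by positivity
  have hkey : ∀ t ∈ s, |g t - p.eval t * p.eval t| ≤ cst := by
    intro t ht
    have ht' := hsub ht
    have h1 : |p.eval t - Real.sqrt (g t)| < ε := hp t ht'
    have h2 : |Real.sqrt (g t)| ≤ B' := hB'b t ht'
    have h3 : Real.sqrt (g t) * Real.sqrt (g t) = g t := Real.mul_self_sqrt (hg0 t)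
    set u := Real.sqrt (g t)
    set v := p.eval t
    rw [← h3]
    rw [abs_le] at h2 ⊢
    have h1' := abs_lt.1 h1
    constructor <;> nlinarith [h1'.1, h1'.2, h2.1, h2.2, hεpos.le, hε1, hB'0]
  have hpint : Integrable (fun t => p.eval t * p.eval t) ν :=
    integrable_of_cont' ν ((Polynomial.continuous p).mul (Polynomial.continuous p)) hs hνs
  have hpintμ : Integrable (fun t => p.eval t * p.eval t) μ :=
    integrable_of_cont' μ ((Polynomial.continuous p).mul (Polynomial.continuous p)) hs hμs
  have step1 : ∫ t, g t ∂ν ≤ (∫ t, p.eval t * p.eval t ∂ν) + cst := by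
    have hmono : ∫ t, g t ∂ν ≤ ∫ t, (p.eval t * p.eval t + cst) ∂ν := by
      refine integral_mono_ae hgint
        ((hpint.add (integrable_const cst)) :
          Integrable (fun t => p.eval t * p.eval t + cst) ν) ?_
      filter_upwards [haeν] with t ht
      have h := hkey t ht
      rw [abs_le] at h
      show g t ≤ p.eval t * p.eval t + cst
      linarith [h.1, h.2]
    rwa [integral_add hpint (integrable_const cst), integral_const, probReal_univ,
      one_smul] at hmono
  have step2 : ∫ t, p.eval t * p.eval t ∂μ ≤ (∫ t, g t ∂μ) + cst := by
    have hmono : ∫ t, (p.eval t * p.eval t) ∂μ ≤ ∫ t, (g t + cst) ∂μ := by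
      refine integral_mono_ae hpintμ
        ((hgintμ.add (integrable_const cst)) : Integrable (fun t => g t + cst) μ) ?_
      filter_upwards [haeμ] with t ht
      have h := hkey t ht
      rw [abs_le] at h
      show p.eval t * p.eval t ≤ g t + cst
      linarith [h.1, h.2]
    rwa [integral_add hgintμ (integrable_const cst), integral_const, probReal_univ,
      one_smul] at hmono
  calc ∫ t, g t ∂ν ≤ (∫ t, p.eval t * p.eval t ∂ν) + cst := step1
  _ ≤ K * (∫ t, p.eval t * p.eval t ∂μ) + cst := by linarith [hP p]
  _ ≤ K * ((∫ t, g t ∂μ) + cst) + cst := by nlinarith [step2]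
  _ = K * (∫ t, g t ∂μ) + cst * (K+1) := by ring
  _ ≤ K * (∫ t, g t ∂μ) + η := by
      have h2 : cst * (K+1) ≤ η := by
        have := hεη
        nlinarith [hεη]
      linarith

/-- Step 2+3 : measure domination -/
lemma measure_le_of_poly (μ ν : Measure ℝ) [IsProbabilityMeasure μ] [IsProbabilityMeasure ν]
    {s : Set ℝ} (hs : IsCompact s) (hμs : μ sᶜ = 0) (hνs : ν sᶜ = 0)
    (K : ℝ) (hK : 0 ≤ K)
    (hP : ∀ p : Polynomial ℝ, ∫ t, p.eval t * p.eval t ∂ν ≤ K * ∫ t, p.eval t * p.eval t ∂μ) :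
    ∀ A : Set ℝ, MeasurableSet A → ν A ≤ ENNReal.ofReal K * μ A := by
  have hcont := integral_cont_le μ ν hs hμs hνs K hK hP
  -- closed sets
  have hclosed : ∀ F : Set ℝ, IsClosed F → ν F ≤ ENNReal.ofReal K * μ F := by
    intro F hF
    have hν := HasOuterApproxClosed.tendsto_lintegral_apprSeq hF ν
    have hμ := HasOuterApproxClosed.tendsto_lintegral_apprSeq hF μ
    have hle : ∀ n : ℕ, (∫⁻ x, (hF.apprSeq n x : ℝ≥0∞) ∂ν)
        ≤ ENNReal.ofReal K * ∫⁻ x, (hF.apprSeq n x : ℝ≥0∞) ∂μ := by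
      intro n
      set g : ℝ → ℝ := fun x => ((hF.apprSeq n x : ℝ≥0) : ℝ) with hgdef
      have hgc : Continuous g := NNReal.continuous_coe.comp (hF.apprSeq n).continuous
      have hg0 : ∀ t, 0 ≤ g t := fun t => (hF.apprSeq n t).coe_nonneg
      have hgiν : Integrable g ν := integrable_of_cont' ν hgc hs hνs
      have hgiμ : Integrable g μ := integrable_of_cont' μ hgc hs hμs
      have e1 : (∫⁻ x, (hF.apprSeq n x : ℝ≥0∞) ∂ν) = ENNReal.ofReal (∫ x, g x ∂ν) := by
        rw [ofReal_integral_eq_lintegral_ofReal hgiν (Eventually.of_forall hg0)]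
        congr 1
        funext x
        rw [ENNReal.ofReal_coe_nnreal]
      have e2 : (∫⁻ x, (hF.apprSeq n x : ℝ≥0∞) ∂μ) = ENNReal.ofReal (∫ x, g x ∂μ) := by
        rw [ofReal_integral_eq_lintegral_ofReal hgiμ (Eventually.of_forall hg0)]
        congr 1
        funext x
        rw [ENNReal.ofReal_coe_nnreal]
      rw [e1, e2, ← ENNReal.ofReal_mul hK]
      exact ENNReal.ofReal_le_ofReal (hcont g hgc hg0)
    have htend : Tendsto (fun n => ENNReal.ofReal K * ∫⁻ x, (hF.apprSeq n x : ℝ≥0∞) ∂μ) atTop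
        (𝓝 (ENNReal.ofReal K * μ F)) :=
      ENNReal.Tendsto.const_mul hμ (Or.inr ENNReal.ofReal_ne_top)
    exact le_of_tendsto_of_tendsto' hν htend hle
  -- general measurable sets by inner regularity
  intro A hA
  refine ENNReal.le_of_forall_pos_le_add fun ε hε hfin => ?_
  have hε' : (ε : ℝ≥0∞) ≠ 0 := by exact_mod_cast hε.ne'
  obtain ⟨F, hFA, hFc, hlt⟩ := hA.exists_isClosed_lt_add (μ := ν) (measure_ne_top ν A) hε'
  calc ν A ≤ ν F + ε := le_of_lt hlt
  _ ≤ ENNReal.ofReal K * μ F + ε := by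
      exact add_le_add_left (hclosed F hFc) _
  _ ≤ ENNReal.ofReal K * μ A + ε := by
      exact add_le_add_left (mul_le_mul_right (measure_mono hFA) _) _




/-- From `ν ≪ μ` with bounded density, get a measure domination. -/
lemma measure_le_of_rnDeriv (μ ν : Measure ℝ) [IsProbabilityMeasure μ] [IsProbabilityMeasure ν]
    (hac : ν ≪ μ) (hm : MemLp (fun t => (ν.rnDeriv μ t).toReal) ⊤ μ) :
    ∃ K : ℝ, 0 ≤ K ∧ ∀ A : Set ℝ, MeasurableSet A → ν A ≤ ENNReal.ofReal K * μ A := by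
  set f : ℝ → ℝ := fun t => (ν.rnDeriv μ t).toReal with hf
  have hE : eLpNormEssSup f μ < ⊤ := by
    have := hm.2
    rwa [eLpNorm_exponent_top] at this
  refine ⟨(eLpNormEssSup f μ).toReal, ENNReal.toReal_nonneg, ?_⟩
  have hofK : ENNReal.ofReal ((eLpNormEssSup f μ).toReal) = eLpNormEssSup f μ :=
    ENNReal.ofReal_toReal hE.ne
  have hbd : ∀ᵐ t ∂μ, ν.rnDeriv μ t ≤ eLpNormEssSup f μ := by
    filter_upwards [Measure.rnDeriv_lt_top ν μ, ae_le_eLpNormEssSup (f := f) (μ := μ)]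
      with t hlt hle
    have h1 : (ν.rnDeriv μ t) = ENNReal.ofReal (f t) := by
      rw [hf]
      exact (ENNReal.ofReal_toReal hlt.ne).symm
    rw [h1]
    refine le_trans ?_ hle
    rw [Real.enorm_eq_ofReal ENNReal.toReal_nonneg]
  intro A hA
  have h1 : ν A = ∫⁻ t in A, ν.rnDeriv μ t ∂μ := (Measure.setLIntegral_rnDeriv hac A).symm
  rw [h1, hofK]
  calc ∫⁻ t in A, ν.rnDeriv μ t ∂μ
      ≤ ∫⁻ _ in A, eLpNormEssSup f μ ∂μ := by
        refine lintegral_mono_ae ?_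
        exact ae_restrict_of_ae hbd
  _ = eLpNormEssSup f μ * μ A := by
        rw [setLIntegral_const]
/-- Converse: measure domination gives absolute continuity with bounded density. -/
lemma rnDeriv_of_measure_le (μ ν : Measure ℝ) [IsProbabilityMeasure μ] [IsProbabilityMeasure ν]
    (K : ℝ) (hK : 0 ≤ K) (h : ∀ A : Set ℝ, MeasurableSet A → ν A ≤ ENNReal.ofReal K * μ A) :
    ν ≪ μ ∧ MemLp (fun t => (ν.rnDeriv μ t).toReal) ⊤ μ := by
  have hac : ν ≪ μ := by
    refine Measure.AbsolutelyContinuous.mk fun A hA h0 => ?_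
    have := h A hA
    rw [h0, mul_zero] at this
    exact le_antisymm this zero_le
  refine ⟨hac, ?_⟩
  have hbd : (fun t => ν.rnDeriv μ t) ≤ᵐ[μ] (fun _ => ENNReal.ofReal K) := by
    refine ae_le_of_forall_setLIntegral_le_of_sigmaFinite (Measure.measurable_rnDeriv ν μ)
      fun A hA _ => ?_
    calc ∫⁻ t in A, ν.rnDeriv μ t ∂μ ≤ ν A := Measure.setLIntegral_rnDeriv_le A
    _ ≤ ENNReal.ofReal K * μ A := h A hA
    _ = ∫⁻ _ in A, ENNReal.ofReal K ∂μ := by rw [setLIntegral_const]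
  refine memLp_top_of_bound ?_ K ?_
  · exact ((Measure.measurable_rnDeriv ν μ).ennreal_toReal).aestronglyMeasurable
  · filter_upwards [hbd] with t ht
    rw [Real.norm_eq_abs, abs_of_nonneg ENNReal.toReal_nonneg]
    calc (ν.rnDeriv μ t).toReal ≤ (ENNReal.ofReal K).toReal :=
      ENNReal.toReal_mono ENNReal.ofReal_ne_top ht
    _ = K := ENNReal.toReal_ofReal hK



lemma lp_sum_single_apply (M : Finset ℕ) (b : ℕ → ℝ) (k : ℕ) :
    (↑(∑ i ∈ M, lp.single 2 i (b i) : H) : ℕ → ℝ) k = if k ∈ M then b k else 0 := by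
  rw [lp.coeFn_sum]
  simp only [Finset.sum_apply]
  have h : ∀ i ∈ M, (↑(lp.single 2 i (b i) : H) : ℕ → ℝ) k = if i = k then b k else 0 := by
    intro i _
    by_cases h : k = i
    · subst h; rw [lp.single_apply_self]; simp
    · rw [lp.single_apply_ne 2 i _ h]; simp [Ne.symm h]
  rw [Finset.sum_congr rfl h, Finset.sum_ite_eq' M k]

lemma lp_single_eq_smul (j : ℕ) (a : ℝ) :
    lp.single 2 j a = a • (lp.single 2 j (1:ℝ) : H) := by
  apply lp.ext
  funext k
  rw [lp.single_apply]
  have : (↑(a • (lp.single 2 j (1:ℝ) : H)) : ℕ → ℝ) k = a * (lp.single 2 j (1:ℝ) : H) k := by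
    rw [lp.coeFn_smul]; simp [smul_eq_mul]
  rw [this, lp.single_apply]
  by_cases h : k = j <;> simp [h]

lemma lp_inner_single (i : ℕ) (x : H) :
    (inner ℝ (lp.single 2 i (1:ℝ)) x : ℝ) = x i := by
  rw [lp.inner_single_left]
  simp [RCLike.inner_apply]

lemma lp_sum_single_norm_sq (M : Finset ℕ) (b : ℕ → ℝ) :
    ‖(∑ i ∈ M, lp.single 2 i (b i) : H)‖^2 = ∑ i ∈ M, (b i)^2 := by
  rw [← real_inner_self_eq_norm_sq]
  rw [sum_inner]
  have : ∀ i ∈ M, (inner ℝ (lp.single 2 i (b i)) (∑ k ∈ M, lp.single 2 k (b k) : H) : ℝ)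
      = (b i)^2 := by
    intro i hi
    rw [lp.inner_single_left]
    have hco := lp_sum_single_apply M b i
    simp only [RCLike.inner_apply, starRingEnd_apply] at *
    rw [hco]
    simp [hi, sq]
  rw [Finset.sum_congr rfl this]

/-- columns of a connection coefficient matrix as elements of ℓ² -/
def colH (c : ℕ → ℕ → ℝ) (j : ℕ) : H := ∑ i ∈ Finset.range (j+1), lp.single 2 i (c i j)

lemma colH_apply (c : ℕ → ℕ → ℝ) (hc0 : ∀ i j, j < i → c i j = 0) (j i : ℕ) :
    (colH c j : ℕ → ℝ) i = c i j := by
  rw [colH, lp_sum_single_apply]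
  by_cases h : i ∈ Finset.range (j+1)
  · simp [h]
  · rw [if_neg h]
    exact (hc0 i j (by simpa using h)).symm

lemma sum_smul_colH_eq (c : ℕ → ℕ → ℝ) (hc0 : ∀ i j, j < i → c i j = 0)
    (F : Finset ℕ) (N : ℕ) (hN : ∀ j ∈ F, j < N) (x : ℕ → ℝ) :
    (∑ j ∈ F, x j • colH c j : H)
      = ∑ i ∈ Finset.range N, lp.single 2 i (∑ j ∈ F, c i j * x j) := by
  apply lp.ext
  funext k
  rw [lp.coeFn_sum, lp_sum_single_apply]
  simp only [Finset.sum_apply]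
  have hterm : ∀ j ∈ F, (↑(x j • colH c j) : ℕ → ℝ) k = c k j * x j := by
    intro j hj
    rw [lp.coeFn_smul]
    simp only [Pi.smul_apply, smul_eq_mul]
    rw [colH_apply c hc0 j k]
    ring
  rw [Finset.sum_congr rfl hterm]
  by_cases h : k ∈ Finset.range N
  · rw [if_pos h]
  · rw [if_neg h]
    refine Finset.sum_eq_zero fun j hj => ?_
    rw [hc0 k j (by have := hN j hj; simp only [Finset.mem_range] at h; omega)]
    ring

lemma sum_smul_colH_norm_sq (c : ℕ → ℕ → ℝ) (hc0 : ∀ i j, j < i → c i j = 0)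
    (F : Finset ℕ) (N : ℕ) (hN : ∀ j ∈ F, j < N) (x : ℕ → ℝ) :
    ‖(∑ j ∈ F, x j • colH c j : H)‖^2
      = ∑ i ∈ Finset.range N, (∑ j ∈ F, c i j * x j)^2 := by
  rw [sum_smul_colH_eq c hc0 F N hN x, lp_sum_single_norm_sq]

lemma dense_span_single :
    Dense ((Submodule.span ℝ (Set.range (fun j => lp.single 2 j (1:ℝ))) : Submodule ℝ H) :
      Set H) := by
  intro x
  have hsum : HasSum (fun j => lp.single 2 j (x j) : ℕ → H) x :=
    lp.hasSum_single (by norm_num) x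
  refine mem_closure_of_tendsto hsum ?_
  filter_upwards with F
  refine Submodule.sum_mem _ fun j _ => ?_
  rw [lp_single_eq_smul]
  exact Submodule.smul_mem _ _ (Submodule.subset_span ⟨j, rfl⟩)

/-- construction of the bounded operator from the norm bound on columns -/
lemma exists_clm_of_col_bound (c : ℕ → ℕ → ℝ) (hc0 : ∀ i j, j < i → c i j = 0)
    (K : ℝ) (hK : 0 ≤ K)
    (hbd : ∀ (F : Finset ℕ) (x : ℕ → ℝ),
      ‖(∑ j ∈ F, x j • colH c j : H)‖^2 ≤ K * ∑ j ∈ F, (x j)^2) :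
    ∃ T : H →L[ℝ] H,
      ∀ i j, (inner ℝ (lp.single 2 i (1:ℝ)) (T (lp.single 2 j (1:ℝ))) : ℝ) = c i j := by
  -- summability of squares of coordinates
  have hx2 : ∀ x : H, Summable (fun j => (x j)^2) := by
    intro x
    have := (lp.memℓp x).summable (by norm_num : 0 < (2:ℝ≥0∞).toReal)
    have h2 : (fun i : ℕ => ‖x i‖ ^ (2:ℝ≥0∞).toReal) = fun i => (x i)^2 := by
      funext i
      rw [show ((2:ℝ≥0∞).toReal) = ((2:ℕ):ℝ) by norm_num, Real.rpow_natCast]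
      simp [sq_abs]
    rwa [h2] at this
  have hxnorm : ∀ (x : H) (F : Finset ℕ), ∑ j ∈ F, (x j)^2 ≤ ‖x‖^2 := by
    intro x F
    have h := lp.norm_rpow_eq_tsum (by norm_num : 0 < (2:ℝ≥0∞).toReal) x
    have h2 : ∀ y : ℝ, y ^ (2:ℝ≥0∞).toReal = y ^ 2 ∨ True := fun y => Or.inr trivial
    have hnorm : ‖x‖ ^ (2:ℝ≥0∞).toReal = ‖x‖^2 := by
      rw [show ((2:ℝ≥0∞).toReal) = ((2:ℕ):ℝ) by norm_num, Real.rpow_natCast]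
    have htsum : (∑' i, ‖x i‖ ^ (2:ℝ≥0∞).toReal) = ∑' i, (x i)^2 := by
      congr 1
      funext i
      rw [show ((2:ℝ≥0∞).toReal) = ((2:ℕ):ℝ) by norm_num, Real.rpow_natCast]
      simp [sq_abs]
    rw [hnorm, htsum] at h
    rw [h]
    exact Summable.sum_le_tsum F (fun j _ => sq_nonneg _) (hx2 x)
  -- summability of the series defining T
  have hsummable : ∀ x : H, Summable (fun j => x j • colH c j) := by
    intro x
    rw [summable_iff_vanishing_norm]
    intro ε hε
    have hx2' := (hx2 x)
    rw [summable_iff_vanishing_norm] at hx2'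
    obtain ⟨s, hs⟩ := hx2' (ε^2 / (K+1)) (by positivity)
    refine ⟨s, fun t ht => ?_⟩
    have h1 := hbd t x
    have h2 := hs t ht
    have h3 : ∑ j ∈ t, (x j)^2 < ε^2/(K+1) := by
      have : ‖∑ j ∈ t, (x j)^2‖ = ∑ j ∈ t, (x j)^2 := by
        rw [Real.norm_eq_abs, abs_of_nonneg (Finset.sum_nonneg fun j _ => sq_nonneg _)]
      rwa [this] at h2
    have h4 : ‖(∑ j ∈ t, x j • colH c j : H)‖^2 < ε^2 := by
      calc ‖(∑ j ∈ t, x j • colH c j : H)‖^2 ≤ K * ∑ j ∈ t, (x j)^2 := h1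
      _ ≤ (K+1) * ∑ j ∈ t, (x j)^2 := by
          nlinarith [Finset.sum_nonneg (fun j (_ : j ∈ t) => sq_nonneg (x j))]
      _ < (K+1) * (ε^2/(K+1)) := by
          apply mul_lt_mul_of_pos_left h3 (by positivity)
      _ = ε^2 := by field_simp
    exact lt_of_pow_lt_pow_left₀ 2 hε.le h4
  -- bound on partial sums
  have hps : ∀ (x : H) (F : Finset ℕ),
      ‖(∑ j ∈ F, x j • colH c j : H)‖ ≤ Real.sqrt K * ‖x‖ := by
    intro x F
    have h1 := hbd F x
    have h2 : ‖(∑ j ∈ F, x j • colH c j : H)‖^2 ≤ K * ‖x‖^2 := by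
      calc ‖(∑ j ∈ F, x j • colH c j : H)‖^2 ≤ K * ∑ j ∈ F, (x j)^2 := h1
      _ ≤ K * ‖x‖^2 := by
          apply mul_le_mul_of_nonneg_left (hxnorm x F) hK
    have h3 : (0:ℝ) ≤ Real.sqrt K * ‖x‖ := by positivity
    nlinarith [Real.sq_sqrt hK, Real.sqrt_nonneg K, norm_nonneg (∑ j ∈ F, x j • colH c j : H),
      norm_nonneg x]
  -- the linear map
  set Tfun : H → H := fun x => ∑' j, x j • colH c j with hTfun
  have hTsum : ∀ x : H, HasSum (fun j => x j • colH c j) (Tfun x) := fun x =>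
    (hsummable x).hasSum
  have hadd : ∀ x y : H, Tfun (x + y) = Tfun x + Tfun y := by
    intro x y
    have h1 : HasSum (fun j => (x+y) j • colH c j) (Tfun x + Tfun y) := by
      have : (fun j => ((x+y) j) • colH c j) = fun j => x j • colH c j + y j • colH c j := by
        funext j
        rw [lp.coeFn_add]
        simp [add_smul]
      rw [this]
      exact (hTsum x).add (hTsum y)
    exact h1.tsum_eq
  have hsmul : ∀ (r : ℝ) (x : H), Tfun (r • x) = r • Tfun x := by
    intro r x
    have h1 : HasSum (fun j => (r • x) j • colH c j) (r • Tfun x) := by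
      have : (fun j => ((r • x) j) • colH c j) = fun j => r • (x j • colH c j) := by
        funext j
        rw [lp.coeFn_smul]
        simp [smul_smul]
      rw [this]
      exact (hTsum x).const_smul r
    exact h1.tsum_eq
  set Tlin : H →ₗ[ℝ] H := { toFun := Tfun, map_add' := hadd, map_smul' := hsmul } with hTlin
  have hbound : ∀ x : H, ‖Tlin x‖ ≤ Real.sqrt K * ‖x‖ := by
    intro x
    have htend : Tendsto (fun F : Finset ℕ => ‖(∑ j ∈ F, x j • colH c j : H)‖)
        atTop (𝓝 ‖Tfun x‖) := Filter.Tendsto.norm (hTsum x)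
    exact le_of_tendsto htend (Eventually.of_forall fun F => hps x F)
  refine ⟨Tlin.mkContinuous (Real.sqrt K) hbound, ?_⟩
  intro i j
  have hT1 : Tlin.mkContinuous (Real.sqrt K) hbound (lp.single 2 j (1:ℝ)) = colH c j := by
    show Tfun (lp.single 2 j 1) = colH c j
    have h1 : HasSum (fun j' => (lp.single 2 j (1:ℝ) : H) j' • colH c j') (colH c j) := by
      have heq : (fun j' => (lp.single 2 j (1:ℝ) : H) j' • colH c j')
          = fun j' => if j' = j then colH c j else 0 := by
        funext j'
        by_cases h : j' = j
        · subst h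
          rw [lp.single_apply_self]
          simp
        · rw [lp.single_apply_ne 2 j _ h]
          simp [h]
      rw [heq]
      exact hasSum_ite_eq j (colH c j)
    exact (hTsum (lp.single 2 j (1:ℝ))).unique h1
  rw [hT1, lp_inner_single, colH_apply c hc0]


lemma integrable_of_cont2 (μ : Measure ℝ) [IsFiniteMeasure μ] {f : ℝ → ℝ} (hf : Continuous f)
    {s : Set ℝ} (hs : IsCompact s) (hμs : μ sᶜ = 0) : Integrable f μ := by
  obtain ⟨C, hC⟩ := hs.exists_bound_of_continuousOn hf.continuousOn
  have hae : ∀ᵐ t ∂μ, t ∈ s := by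
    rw [ae_iff]; exact hμs
  refine Integrable.mono' (integrable_const C) hf.aestronglyMeasurable ?_
  filter_upwards [hae] with t ht using hC t ht

lemma conn_coeff_integral (ν : Measure ℝ) [IsProbabilityMeasure ν] {s : Set ℝ} (hs : IsCompact s)
    (hνs : ν sᶜ = 0) (P Q : ℕ → Polynomial ℝ) (c : ℕ → ℕ → ℝ)
    (hc : ∀ j, P j = ∑ i ∈ Finset.range (j+1), Polynomial.C (c i j) * Q i)
    (hc0 : ∀ i j, j < i → c i j = 0)
    (hνorth : ∀ j k, ∫ t, (Q j).eval t * (Q k).eval t ∂ν = if j = k then 1 else 0)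
    (k i : ℕ) : ∫ t, (P i).eval t * (Q k).eval t ∂ν = c k i := by
  have heval : ∀ t : ℝ, (P i).eval t * (Q k).eval t
      = ∑ k' ∈ Finset.range (i+1), c k' i * ((Q k').eval t * (Q k).eval t) := by
    intro t
    rw [hc i]
    rw [Polynomial.eval_finset_sum, Finset.sum_mul]
    refine Finset.sum_congr rfl fun k' _ => ?_
    rw [Polynomial.eval_mul, Polynomial.eval_C]
    ring
  rw [integral_congr_ae (Eventually.of_forall heval)]
  rw [integral_finset_sum _ (fun k' _ => ?_)]
  · have : ∀ k' ∈ Finset.range (i+1),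
        ∫ t, c k' i * ((Q k').eval t * (Q k).eval t) ∂ν
          = if k' = k then c k i else 0 := by
      intro k' _
      rw [integral_const_mul, hνorth k' k]
      by_cases h : k' = k
      · subst h; simp
      · simp [h]
    rw [Finset.sum_congr rfl this, Finset.sum_ite_eq' (Finset.range (i+1)) k]
    by_cases h : k ∈ Finset.range (i+1)
    · rw [if_pos h]
    · rw [if_neg h]
      exact (hc0 k i (by simpa using h)).symm
  · exact (integrable_of_cont2 ν (by
      exact continuous_const.mul ((Polynomial.continuous _).mul (Polynomial.continuous _)))
      hs hνs)

lemma conn_inv (ν : Measure ℝ) [IsProbabilityMeasure ν] {s : Set ℝ} (hs : IsCompact s)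
    (hνs : ν sᶜ = 0) (P Q : ℕ → Polynomial ℝ) (c d : ℕ → ℕ → ℝ)
    (hc : ∀ j, P j = ∑ i ∈ Finset.range (j+1), Polynomial.C (c i j) * Q i)
    (hc0 : ∀ i j, j < i → c i j = 0)
    (hd : ∀ j, Q j = ∑ i ∈ Finset.range (j+1), Polynomial.C (d i j) * P i)
    (hνorth : ∀ j k, ∫ t, (Q j).eval t * (Q k).eval t ∂ν = if j = k then 1 else 0)
    (k j : ℕ) :
    ∑ i ∈ Finset.range (j+1), d i j * c k i = if k = j then 1 else 0 := by
  have h1 : ∀ i ∈ Finset.range (j+1), d i j * c k i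
      = ∫ t, d i j * ((P i).eval t * (Q k).eval t) ∂ν := by
    intro i _
    rw [integral_const_mul, conn_coeff_integral ν hs hνs P Q c hc hc0 hνorth k i]
  rw [Finset.sum_congr rfl h1]
  rw [← integral_finset_sum _ (fun i _ => (integrable_of_cont2 ν (by
      exact continuous_const.mul ((Polynomial.continuous _).mul (Polynomial.continuous _)))
      hs hνs))]
  have heval : ∀ t : ℝ, ∑ i ∈ Finset.range (j+1), d i j * ((P i).eval t * (Q k).eval t)
      = (Q j).eval t * (Q k).eval t := by
    intro t
    rw [hd j, Polynomial.eval_finset_sum, Finset.sum_mul]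
    refine Finset.sum_congr rfl fun i _ => ?_
    rw [Polynomial.eval_mul, Polynomial.eval_C]
    ring
  rw [integral_congr_ae (Eventually.of_forall heval), hνorth j k]
  by_cases h : j = k
  · subst h; simp
  · simp [h, Ne.symm h]

set_option synthInstance.maxHeartbeats 1000000 in
lemma comp_eq_id (c d : ℕ → ℕ → ℝ) (hd0 : ∀ i j, j < i → d i j = 0)
    (hinv : ∀ k j, ∑ i ∈ Finset.range (j+1), d i j * c k i = if k = j then 1 else 0)
    (T S : H →L[ℝ] H)
    (hT : ∀ i j, (inner ℝ (lp.single 2 i (1:ℝ)) (T (lp.single 2 j (1:ℝ))) : ℝ) = c i j)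
    (hS : ∀ i j, (inner ℝ (lp.single 2 i (1:ℝ)) (S (lp.single 2 j (1:ℝ))) : ℝ) = d i j) :
    T.comp S = ContinuousLinearMap.id ℝ H := by
  apply ContinuousLinearMap.ext_on dense_span_single
  rintro x ⟨j, rfl⟩
  have hSj : S (lp.single 2 j (1:ℝ)) = ∑ i ∈ Finset.range (j+1), lp.single 2 i (d i j) := by
    apply lp.ext; funext k
    rw [lp_sum_single_apply]
    have hcoord : (S (lp.single 2 j (1:ℝ)) : ℕ → ℝ) k = d k j := by
      rw [← lp_inner_single k _]; exact hS k j
    rw [hcoord]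
    by_cases h : k ∈ Finset.range (j+1)
    · simp [h]
    · rw [if_neg h]; exact hd0 k j (by simpa using h)
  show T (S (lp.single 2 j (1:ℝ))) = lp.single 2 j (1:ℝ)
  rw [hSj, map_sum]
  apply lp.ext; funext k
  rw [lp.coeFn_sum]
  simp only [Finset.sum_apply]
  have hterm : ∀ i ∈ Finset.range (j+1),
      (T (lp.single 2 i (d i j)) : ℕ → ℝ) k = d i j * c k i := by
    intro i _
    rw [lp_single_eq_smul i (d i j), T.map_smul, lp.coeFn_smul]
    simp only [Pi.smul_apply, smul_eq_mul]
    congr 1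
    rw [← lp_inner_single k _]
    exact hT k i
  rw [Finset.sum_congr rfl hterm, hinv k j]
  by_cases h : k = j
  · subst h; rw [lp.single_apply_self]; simp
  · rw [lp.single_apply_ne 2 j _ h]; simp [h]




lemma key_eq (ν : Measure ℝ) [IsProbabilityMeasure ν] {s : Set ℝ} (hs : IsCompact s)
    (hνs : ν sᶜ = 0) (P Q : ℕ → Polynomial ℝ) (c : ℕ → ℕ → ℝ)
    (hc : ∀ j, P j = ∑ i ∈ Finset.range (j+1), Polynomial.C (c i j) * Q i)
    (hc0 : ∀ i j, j < i → c i j = 0)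
    (hνorth : ∀ j k, ∫ t, (Q j).eval t * (Q k).eval t ∂ν = if j = k then 1 else 0)
    (F : Finset ℕ) (x : ℕ → ℝ) :
    ‖(∑ j ∈ F, x j • colH c j : H)‖^2
      = ∫ t, (∑ j ∈ F, x j * (P j).eval t) * (∑ j ∈ F, x j * (P j).eval t) ∂ν := by
  set N := F.sup id + 1 with hNdef
  have hN : ∀ j ∈ F, j < N := fun j hj => Nat.lt_succ_of_le (Finset.le_sup (f := id) hj)
  set b : ℕ → ℝ := fun i => ∑ j ∈ F, c i j * x j with hb
  rw [sum_smul_colH_norm_sq c hc0 F N hN x]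
  have hpoly := sum_basis_swap P Q c hc hc0 F N hN x
  have heval : ∀ t : ℝ, ∑ j ∈ F, x j * (P j).eval t
      = ∑ i ∈ Finset.range N, b i * (Q i).eval t := by
    intro t
    have h := congrArg (Polynomial.eval t) hpoly
    simpa [Polynomial.eval_finset_sum, mul_comm] using h
  rw [integral_congr_ae (Eventually.of_forall (fun t => by rw [heval t]))]
  rw [integral_sq_sum ν hs hνs Q hνorth (Finset.range N) b]

lemma integral_sq_le_of_measure_le (μ ν : Measure ℝ) [IsProbabilityMeasure μ]
    [IsProbabilityMeasure ν] {s : Set ℝ} (hs : IsCompact s) (hμs : μ sᶜ = 0)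
    (K : ℝ) (hK : 0 ≤ K) (hdom : ∀ A : Set ℝ, MeasurableSet A → ν A ≤ ENNReal.ofReal K * μ A)
    (f : ℝ → ℝ) (hf : Continuous f) (hf0 : ∀ t, 0 ≤ f t) :
    ∫ t, f t ∂ν ≤ K * ∫ t, f t ∂μ := by
  have hle : ν ≤ (ENNReal.ofReal K) • μ := by
    refine Measure.le_iff.2 fun A hA => ?_
    rw [Measure.smul_apply, smul_eq_mul]
    exact hdom A hA
  have hint : Integrable f ((ENNReal.ofReal K) • μ) :=
    (integrable_of_cont' μ hf hs hμs).smul_measure ENNReal.ofReal_ne_top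
  calc ∫ t, f t ∂ν ≤ ∫ t, f t ∂((ENNReal.ofReal K) • μ) :=
    integral_mono_measure hle (Eventually.of_forall hf0) hint
  _ = (ENNReal.ofReal K).toReal • ∫ t, f t ∂μ := integral_smul_measure f _
  _ = K * ∫ t, f t ∂μ := by rw [ENNReal.toReal_ofReal hK, smul_eq_mul]

lemma T_single_eq_col (c : ℕ → ℕ → ℝ) (hc0 : ∀ i j, j < i → c i j = 0) (T : H →L[ℝ] H)
    (hT : ∀ i j, (inner ℝ (lp.single 2 i (1:ℝ)) (T (lp.single 2 j (1:ℝ))) : ℝ) = c i j) (j : ℕ) :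
    T (lp.single 2 j (1:ℝ)) = colH c j := by
  apply lp.ext; funext i
  have h1 : (T (lp.single 2 j (1:ℝ)) : ℕ → ℝ) i = c i j := by
    rw [← lp_inner_single i _]; exact hT i j
  rw [h1, colH_apply c hc0]

lemma build_clm (μ ν : Measure ℝ) [IsProbabilityMeasure μ] [IsProbabilityMeasure ν]
    {s : Set ℝ} (hs : IsCompact s) (hμs : μ sᶜ = 0) (hνs : ν sᶜ = 0)
    (P Q : ℕ → Polynomial ℝ) (c : ℕ → ℕ → ℝ)
    (hc : ∀ j, P j = ∑ i ∈ Finset.range (j+1), Polynomial.C (c i j) * Q i)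
    (hc0 : ∀ i j, j < i → c i j = 0)
    (hμorth : ∀ j k, ∫ t, (P j).eval t * (P k).eval t ∂μ = if j = k then 1 else 0)
    (hνorth : ∀ j k, ∫ t, (Q j).eval t * (Q k).eval t ∂ν = if j = k then 1 else 0)
    (K : ℝ) (hK : 0 ≤ K) (hdom : ∀ A : Set ℝ, MeasurableSet A → ν A ≤ ENNReal.ofReal K * μ A) :
    ∃ T : H →L[ℝ] H,
      ∀ i j, (inner ℝ (lp.single 2 i (1:ℝ)) (T (lp.single 2 j (1:ℝ))) : ℝ) = c i j := by
  apply exists_clm_of_col_bound c hc0 K hK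
  intro F x
  rw [key_eq ν hs hνs P Q c hc hc0 hνorth F x]
  have hcont : Continuous fun t => ∑ j ∈ F, x j * (P j).eval t :=
    continuous_finset_sum _ (fun j _ => continuous_const.mul (Polynomial.continuous _))
  have h2 := integral_sq_le_of_measure_le μ ν hs hμs K hK hdom
    (fun t => (∑ j ∈ F, x j * (P j).eval t) * (∑ j ∈ F, x j * (P j).eval t))
    (hcont.mul hcont) (fun t => mul_self_nonneg _)
  calc ∫ t, (∑ j ∈ F, x j * (P j).eval t) * (∑ j ∈ F, x j * (P j).eval t) ∂ν
      ≤ K * ∫ t, (∑ j ∈ F, x j * (P j).eval t) * (∑ j ∈ F, x j * (P j).eval t) ∂μ := h2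
  _ = K * ∑ j ∈ F, (x j)^2 := by rw [integral_sq_sum μ hs hμs P hμorth F x]

lemma dom_of_clm (μ ν : Measure ℝ) [IsProbabilityMeasure μ] [IsProbabilityMeasure ν]
    {s : Set ℝ} (hs : IsCompact s) (hμs : μ sᶜ = 0) (hνs : ν sᶜ = 0)
    (a b : ℕ → ℝ) (hbpos : ∀ k, 0 < b k) (Q : ℕ → Polynomial ℝ) (c : ℕ → ℕ → ℝ)
    (hc : ∀ j, orthPoly a b j = ∑ i ∈ Finset.range (j+1), Polynomial.C (c i j) * Q i)
    (hc0 : ∀ i j, j < i → c i j = 0)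
    (hμorth : ∀ j k, ∫ t, (orthPoly a b j).eval t * (orthPoly a b k).eval t ∂μ
      = if j = k then 1 else 0)
    (hνorth : ∀ j k, ∫ t, (Q j).eval t * (Q k).eval t ∂ν = if j = k then 1 else 0)
    (T : H →L[ℝ] H)
    (hT : ∀ i j, (inner ℝ (lp.single 2 i (1:ℝ)) (T (lp.single 2 j (1:ℝ))) : ℝ) = c i j) :
    ∀ A : Set ℝ, MeasurableSet A → ν A ≤ ENNReal.ofReal (‖T‖^2) * μ A := by
  apply measure_le_of_poly μ ν hs hμs hνs (‖T‖^2) (sq_nonneg _)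
  intro p
  set M := p.natDegree + 1 with hM
  obtain ⟨x, hx⟩ := orthPoly_span a b hbpos M p
    (fun m hm => coeff_eq_zero_of_natDegree_lt (by omega))
  have he1 : ∀ t : ℝ, p.eval t = ∑ j ∈ Finset.range M, x j * (orthPoly a b j).eval t := by
    intro t
    rw [hx]
    rw [Polynomial.eval_finset_sum]
    exact Finset.sum_congr rfl fun j _ => by rw [Polynomial.eval_mul, Polynomial.eval_C]
  have h1 : ∫ t, p.eval t * p.eval t ∂ν
      = ‖(∑ j ∈ Finset.range M, x j • colH c j : H)‖^2 := by
    rw [key_eq ν hs hνs (orthPoly a b) Q c hc hc0 hνorth (Finset.range M) x]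
    simp only [he1]
  have h2 : ∫ t, p.eval t * p.eval t ∂μ = ∑ j ∈ Finset.range M, (x j)^2 := by
    rw [← integral_sq_sum μ hs hμs (orthPoly a b) hμorth (Finset.range M) x]
    simp only [he1]
  set y : H := ∑ j ∈ Finset.range M, lp.single 2 j (x j) with hy
  have h3 : (∑ j ∈ Finset.range M, x j • colH c j : H) = T y := by
    rw [hy, map_sum]
    refine Finset.sum_congr rfl fun j _ => ?_
    rw [lp_single_eq_smul j (x j), T.map_smul, T_single_eq_col c hc0 T hT j]
  have h4 : ‖y‖^2 = ∑ j ∈ Finset.range M, (x j)^2 := lp_sum_single_norm_sq _ _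
  have h5 : ‖T y‖ ≤ ‖T‖ * ‖y‖ := T.le_opNorm y
  have h6 : ‖T y‖^2 ≤ ‖T‖^2 * ‖y‖^2 := by
    rw [← mul_pow]
    exact pow_le_pow_left₀ (norm_nonneg _) h5 2
  rw [h1, h2, h3]
  rw [← h4]
  exact h6

/-- `dν/dμ ∈ L^∞(μ)` and `dμ/dν ∈ L^∞(ν)` iff both `C_{J→D}` and `C_{D→J}` are
realized by bounded operators on `ℓ²(ℕ)`; in that case the two operators are mutually inverse. -/
theorem stmt5 (α β γ δ : ℕ → ℝ) (hβ : ∀ k, 0 < β k) (hδ : ∀ k, 0 < δ k)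
    (hαbd : ∃ M, ∀ k, |α k| ≤ M) (hβbd : ∃ M, ∀ k, |β k| ≤ M)
    (hγbd : ∃ M, ∀ k, |γ k| ≤ M) (hδbd : ∃ M, ∀ k, |δ k| ≤ M)
    (c d : ℕ → ℕ → ℝ)
    (hc : ∀ j, orthPoly α β j =
      ∑ i ∈ Finset.range (j+1), Polynomial.C (c i j) * orthPoly γ δ i)
    (hc0 : ∀ i j, j < i → c i j = 0)
    (hd : ∀ j, orthPoly γ δ j =
      ∑ i ∈ Finset.range (j+1), Polynomial.C (d i j) * orthPoly α β i)
    (hd0 : ∀ i j, j < i → d i j = 0)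
    (μ ν : Measure ℝ) [IsProbabilityMeasure μ] [IsProbabilityMeasure ν]
    (hμcomp : ∃ s : Set ℝ, IsCompact s ∧ μ sᶜ = 0)
    (hνcomp : ∃ s : Set ℝ, IsCompact s ∧ ν sᶜ = 0)
    (hμorth : ∀ j k, ∫ s, (orthPoly α β j).eval s * (orthPoly α β k).eval s ∂μ
      = if j = k then 1 else 0)
    (hνorth : ∀ j k, ∫ s, (orthPoly γ δ j).eval s * (orthPoly γ δ k).eval s ∂ν
      = if j = k then 1 else 0) :
    ((ν ≪ μ ∧ MemLp (fun s => (ν.rnDeriv μ s).toReal) ⊤ μ ∧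
      μ ≪ ν ∧ MemLp (fun s => (μ.rnDeriv ν s).toReal) ⊤ ν)
        ↔ (∃ T S : lp (fun _ : ℕ => ℝ) 2 →L[ℝ] lp (fun _ : ℕ => ℝ) 2,
            (∀ i j, (inner ℝ (lp.single 2 i (1:ℝ)) (T (lp.single 2 j (1:ℝ))) : ℝ) = c i j) ∧
            (∀ i j, (inner ℝ (lp.single 2 i (1:ℝ)) (S (lp.single 2 j (1:ℝ))) : ℝ) = d i j))) ∧
    (∀ T S : lp (fun _ : ℕ => ℝ) 2 →L[ℝ] lp (fun _ : ℕ => ℝ) 2,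
      (∀ i j, (inner ℝ (lp.single 2 i (1:ℝ)) (T (lp.single 2 j (1:ℝ))) : ℝ) = c i j) →
      (∀ i j, (inner ℝ (lp.single 2 i (1:ℝ)) (S (lp.single 2 j (1:ℝ))) : ℝ) = d i j) →
      T.comp S = ContinuousLinearMap.id ℝ (lp (fun _ : ℕ => ℝ) 2) ∧
      S.comp T = ContinuousLinearMap.id ℝ (lp (fun _ : ℕ => ℝ) 2)) := by
  obtain ⟨s1, hs1, hμs1⟩ := hμcomp
  obtain ⟨s2, hs2, hνs2⟩ := hνcomp
  set s : Set ℝ := s1 ∪ s2 with hsdef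
  have hs : IsCompact s := hs1.union hs2
  have hμs : μ sᶜ = 0 := by
    refine measure_mono_null ?_ hμs1
    rw [hsdef, Set.compl_union]
    exact Set.inter_subset_left
  have hνs : ν sᶜ = 0 := by
    refine measure_mono_null ?_ hνs2
    rw [hsdef, Set.compl_union]
    exact Set.inter_subset_right
  constructor
  · constructor
    · rintro ⟨hac1, hm1, hac2, hm2⟩
      obtain ⟨K1, hK1, hdom1⟩ := measure_le_of_rnDeriv μ ν hac1 hm1
      obtain ⟨K2, hK2, hdom2⟩ := measure_le_of_rnDeriv ν μ hac2 hm2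
      obtain ⟨T, hT⟩ := build_clm μ ν hs hμs hνs (orthPoly α β) (orthPoly γ δ) c hc hc0
        hμorth hνorth K1 hK1 hdom1
      obtain ⟨S, hS⟩ := build_clm ν μ hs hνs hμs (orthPoly γ δ) (orthPoly α β) d hd hd0
        hνorth hμorth K2 hK2 hdom2
      exact ⟨T, S, hT, hS⟩
    · rintro ⟨T, S, hT, hS⟩
      have hdom1 := dom_of_clm μ ν hs hμs hνs α β hβ (orthPoly γ δ) c hc hc0 hμorth hνorth T hT
      have hdom2 := dom_of_clm ν μ hs hνs hμs γ δ hδ (orthPoly α β) d hd hd0 hνorth hμorth S hS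
      obtain ⟨h1, h2⟩ := rnDeriv_of_measure_le μ ν (‖T‖^2) (sq_nonneg _) hdom1
      obtain ⟨h3, h4⟩ := rnDeriv_of_measure_le ν μ (‖S‖^2) (sq_nonneg _) hdom2
      exact ⟨h1, h2, h3, h4⟩
  · intro T S hT hS
    have hinv1 : ∀ k j, ∑ i ∈ Finset.range (j+1), d i j * c k i = if k = j then 1 else 0 :=
      fun k j => conn_inv ν hs hνs (orthPoly α β) (orthPoly γ δ) c d hc hc0 hd hνorth k j
    have hinv2 : ∀ k j, ∑ i ∈ Finset.range (j+1), c i j * d k i = if k = j then 1 else 0 :=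
      fun k j => conn_inv μ hs hμs (orthPoly γ δ) (orthPoly α β) d c hd hd0 hc hμorth k j
    exact ⟨comp_eq_id c d hd0 hinv1 T S hT hS, comp_eq_id d c hc0 hinv2 S T hS hT⟩

end
end
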